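/- arXiv:2307.16056 — 5 statements merged into one kernel-verified Lean document; each statement's English description precedes it below -/
import Mathlib

section
/- Let 𝒜 = {A₁, A₂, A₃, A₄} be a 4-cover of ℝ. Suppose that (i) there exists a family {Fₙ : n ∈ ω} of subsets of A₃ such that A₃ = ⋃ₙ Fₙ and, for every n ∈ ω, the closure of Fₙ in 𝕊← is contained in A₂ ∪ A₃, and (ii) there exists a family {Hₙ : n ∈ ω} of subsets of A₄ such that A₄ = ⋃ₙ Hₙ and, for every n ∈ ω, the closure of Hₙ in 𝕊 is contained in A₂ ∪ A₄. Then the hybrid space H₄(𝒜) is non-archimedeanly quasi-metrizable. -/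
open Set

/-- The Sorgenfrey topology on ℝ (generated by the intervals `[a, b)`). -/
def sorgenfreyTop : TopologicalSpace ℝ :=
  TopologicalSpace.generateFrom {S : Set ℝ | ∃ a b : ℝ, S = Set.Ico a b}

/-- The "left" Sorgenfrey topology on ℝ (generated by the intervals `(a, b]`). -/
def sorgenfreyLeftTop : TopologicalSpace ℝ :=
  TopologicalSpace.generateFrom {S : Set ℝ | ∃ a b : ℝ, S = Set.Ioc a b}

/-- `A₁, A₂, A₃, A₄` form a 4-cover of ℝ: pairwise disjoint with union ℝ. -/
def Is4Cover (A₁ A₂ A₃ A₄ : Set ℝ) : Prop :=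
  A₁ ∪ A₂ ∪ A₃ ∪ A₄ = Set.univ ∧
  Disjoint A₁ A₂ ∧ Disjoint A₁ A₃ ∧ Disjoint A₁ A₄ ∧
  Disjoint A₂ A₃ ∧ Disjoint A₂ A₄ ∧ Disjoint A₃ A₄

/-- The hybrid topology determined by a 4-cover: points of `A₁` have the usual
open intervals as a local base, points of `A₂` are isolated, points of `A₃`
have a local base of sets `[x, x+ε)`, and points of `A₄` of sets `(x-ε, x]`. -/
def hybridTop (A₁ A₂ A₃ A₄ : Set ℝ) : TopologicalSpace ℝ :=
  TopologicalSpace.generateFrom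
    ({S : Set ℝ | ∃ x ∈ A₁, ∃ ε : ℝ, 0 < ε ∧ S = Set.Ioo (x - ε) (x + ε)} ∪
     {S : Set ℝ | ∃ x ∈ A₂, S = {x}} ∪
     {S : Set ℝ | ∃ x ∈ A₃, ∃ ε : ℝ, 0 < ε ∧ S = Set.Ico x (x + ε)} ∪
     {S : Set ℝ | ∃ x ∈ A₄, ∃ ε : ℝ, 0 < ε ∧ S = Set.Ioc (x - ε) x})

/-- A quasi-metric: nonnegative, vanishing exactly on the diagonal,
satisfying the triangle inequality. -/
def IsQuasiMetric {X : Type*} (ρ : X → X → ℝ) : Prop :=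
  (∀ x y, 0 ≤ ρ x y) ∧ (∀ x y, ρ x y = 0 ↔ x = y) ∧
  (∀ x y z, ρ x y ≤ ρ x z + ρ z y)

/-- A non-archimedean quasi-metric. -/
def IsNAQuasiMetric {X : Type*} (ρ : X → X → ℝ) : Prop :=
  IsQuasiMetric ρ ∧ ∀ x y z, ρ x y ≤ max (ρ x z) (ρ z y)

/-- The topology induced by a quasi-metric: the balls `B_ρ(x, r)` form a base. -/
def quasiMetricTop {X : Type*} (ρ : X → X → ℝ) : TopologicalSpace X :=
  TopologicalSpace.generateFrom
    {B : Set X | ∃ x : X, ∃ r : ℝ, 0 < r ∧ B = {y : X | ρ x y < r}}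

/-- A topology is quasi-metrizable if it is induced by some quasi-metric. -/
def QuasiMetrizableTop {X : Type*} (t : TopologicalSpace X) : Prop :=
  ∃ ρ : X → X → ℝ, IsQuasiMetric ρ ∧ t = quasiMetricTop ρ

/-- A topology is non-archimedeanly quasi-metrizable if it is induced by some
non-archimedean quasi-metric. -/
def NAQuasiMetrizableTop {X : Type*} (t : TopologicalSpace X) : Prop :=
  ∃ ρ : X → X → ℝ, IsNAQuasiMetric ρ ∧ t = quasiMetricTop ρ

namespace HybridAux
noncomputable section

/-- least level-`n` dyadic strictly above `y` -/
def qg (n : ℕ) (y : ℝ) : ℝ := (⌊y * 2 ^ n⌋ + 1 : ℤ) / 2 ^ n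
/-- greatest level-`n` dyadic strictly below `y` -/
def pg (n : ℕ) (y : ℝ) : ℝ := (⌈y * 2 ^ n⌉ - 1 : ℤ) / 2 ^ n

lemma two_pow_pos (n : ℕ) : (0:ℝ) < 2 ^ n := by positivity

lemma lt_qg (n : ℕ) (y : ℝ) : y < qg n y := by
  rw [qg, lt_div_iff₀ (two_pow_pos n)]
  have := Int.lt_floor_add_one (y * 2 ^ n)
  push_cast
  linarith

lemma qg_le (n : ℕ) (y : ℝ) : qg n y ≤ y + ((2:ℝ) ^ n)⁻¹ := by
  have h2 := two_pow_pos n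
  rw [qg, div_le_iff₀ h2]
  have h3 : (y + ((2:ℝ)^n)⁻¹) * 2 ^ n = y * 2^n + 1 := by field_simp
  rw [h3]
  have := Int.floor_le (y * 2 ^ n)
  push_cast
  linarith

lemma pg_lt (n : ℕ) (y : ℝ) : pg n y < y := by
  rw [pg, div_lt_iff₀ (two_pow_pos n)]
  have := Int.ceil_lt_add_one (y * 2 ^ n)
  push_cast
  linarith

lemma le_pg (n : ℕ) (y : ℝ) : y - ((2:ℝ) ^ n)⁻¹ ≤ pg n y := by
  have h2 := two_pow_pos n
  rw [pg, le_div_iff₀ h2]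
  have h3 : (y - ((2:ℝ)^n)⁻¹) * 2 ^ n = y * 2^n - 1 := by field_simp
  rw [h3]
  have := Int.le_ceil (y * 2 ^ n)
  push_cast
  linarith

lemma qg_min (n : ℕ) (y : ℝ) (j : ℤ) (h : y < (j : ℝ) / 2 ^ n) : qg n y ≤ (j : ℝ) / 2 ^ n := by
  have h2 := two_pow_pos n
  rw [lt_div_iff₀ h2] at h
  rw [qg, div_le_div_iff₀ h2 h2]
  have hj : ⌊y * 2 ^ n⌋ + 1 ≤ j := Int.add_one_le_iff.2 (Int.floor_lt.2 h)
  have : ((⌊y * 2 ^ n⌋ + 1 : ℤ) : ℝ) ≤ (j : ℝ) := by exact_mod_cast hj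
  nlinarith

lemma pg_max (n : ℕ) (y : ℝ) (j : ℤ) (h : (j : ℝ) / 2 ^ n < y) : (j : ℝ) / 2 ^ n ≤ pg n y := by
  have h2 := two_pow_pos n
  rw [div_lt_iff₀ h2] at h
  rw [pg, div_le_div_iff₀ h2 h2]
  have hj : j ≤ ⌈y * 2 ^ n⌉ - 1 := Int.le_sub_one_iff.2 (Int.lt_ceil.2 h)
  have : (j : ℝ) ≤ ((⌈y * 2 ^ n⌉ - 1 : ℤ) : ℝ) := by exact_mod_cast hj
  nlinarith

lemma qg_rep {m n : ℕ} (h : m ≤ n) (t : ℝ) :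
    qg m t = ((⌊t * 2 ^ m⌋ + 1) * 2 ^ (n - m) : ℤ) / 2 ^ n := by
  have h2m := two_pow_pos m
  have h2n := two_pow_pos n
  have hpow : (2:ℝ) ^ (n - m) * 2 ^ m = 2 ^ n := by
    rw [← pow_add, Nat.sub_add_cancel h]
  rw [qg, div_eq_div_iff h2m.ne' h2n.ne']
  push_cast
  rw [mul_assoc, hpow]

lemma pg_rep {m n : ℕ} (h : m ≤ n) (t : ℝ) :
    pg m t = ((⌈t * 2 ^ m⌉ - 1) * 2 ^ (n - m) : ℤ) / 2 ^ n := by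
  have h2m := two_pow_pos m
  have h2n := two_pow_pos n
  have hpow : (2:ℝ) ^ (n - m) * 2 ^ m = 2 ^ n := by
    rw [← pow_add, Nat.sub_add_cancel h]
  rw [pg, div_eq_div_iff h2m.ne' h2n.ne']
  push_cast
  rw [mul_assoc, hpow]

lemma qg_absorb {m n : ℕ} (h : m ≤ n) {y t : ℝ} (ht : y < qg m t) : qg n y ≤ qg m t := by
  rw [qg_rep h t] at ht ⊢
  exact qg_min n y _ ht

lemma pg_absorb {m n : ℕ} (h : m ≤ n) {y t : ℝ} (ht : pg m t < y) : pg m t ≤ pg n y := by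
  rw [pg_rep h t] at ht ⊢
  exact pg_max n y _ ht


lemma qg_anti {m n : ℕ} (h : m ≤ n) (y : ℝ) : qg n y ≤ qg m y :=
  qg_absorb h (lt_qg m y)

lemma pg_mono {m n : ℕ} (h : m ≤ n) (y : ℝ) : pg m y ≤ pg n y :=
  pg_absorb h (pg_lt m y)

/-- cumulative unions -/
def cum (F : ℕ → Set ℝ) : ℕ → Set ℝ
  | 0 => F 0
  | n + 1 => cum F n ∪ F (n + 1)

lemma subset_cum (F : ℕ → Set ℝ) (n : ℕ) : F n ⊆ cum F n := by
  cases n with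
  | zero => exact le_rfl
  | succ n => exact subset_union_right

lemma cum_mono (F : ℕ → Set ℝ) {m n : ℕ} (h : m ≤ n) : cum F m ⊆ cum F n := by
  induction n with
  | zero => exact Nat.le_zero.1 h ▸ le_rfl
  | succ n ih =>
    rcases Nat.lt_or_ge m (n+1) with h'|h'
    · exact (ih (Nat.lt_succ_iff.1 h')).trans subset_union_left
    · exact le_of_eq (congrArg (cum F) (le_antisymm h h'))

lemma cum_subset {F : ℕ → Set ℝ} {A : Set ℝ} (hA : ∀ n, F n ⊆ A) : ∀ n, cum F n ⊆ A := by
  intro n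
  induction n with
  | zero => exact hA 0
  | succ n ih => exact union_subset ih (hA (n+1))

lemma cum_closure {τ : TopologicalSpace ℝ} {F : ℕ → Set ℝ} {C : Set ℝ}
    (h : ∀ n, @closure ℝ τ (F n) ⊆ C) : ∀ n, @closure ℝ τ (cum F n) ⊆ C := by
  letI := τ
  intro n
  induction n with
  | zero => exact h 0
  | succ n ih => rw [show cum F (n+1) = cum F n ∪ F (n+1) from rfl, closure_union]
                 exact union_subset ih (h (n+1))

/-- openness criterion for generated topologies -/
lemma gen_open {X : Type*} {G : Set (Set X)} {S : Set X}
    (h : ∀ y ∈ S, ∃ g ∈ G, y ∈ g ∧ g ⊆ S) :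
    (TopologicalSpace.generateFrom G).IsOpen S := by
  have hS : S = ⋃₀ {g | g ∈ G ∧ g ⊆ S} := by
    ext z
    constructor
    · intro hz
      obtain ⟨g, hg, hzg, hgS⟩ := h z hz
      exact ⟨g, ⟨hg, hgS⟩, hzg⟩
    · rintro ⟨g, ⟨-, hgS⟩, hzg⟩
      exact hgS hzg
  rw [hS]
  exact TopologicalSpace.GenerateOpen.sUnion _ (fun s hs => .basic s hs.1)

lemma genOpen_Ioc {o : Set ℝ}
    (ho : TopologicalSpace.GenerateOpen {S : Set ℝ | ∃ a b : ℝ, S = Set.Ioc a b} o) :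
    ∀ y ∈ o, ∃ ε > 0, Ioc (y - ε) y ⊆ o := by
  induction ho with
  | basic s hs =>
    obtain ⟨a, b, rfl⟩ := hs
    intro y hy
    refine ⟨y - a, by linarith [hy.1], fun z hz => ⟨by linarith [hz.1], le_trans hz.2 hy.2⟩⟩
  | univ => exact fun y _ => ⟨1, one_pos, fun z _ => mem_univ z⟩
  | inter s t _ _ ihs iht =>
    intro y hy
    obtain ⟨ε₁, hε₁, h₁⟩ := ihs y hy.1
    obtain ⟨ε₂, hε₂, h₂⟩ := iht y hy.2
    refine ⟨min ε₁ ε₂, lt_min hε₁ hε₂, fun z hz => ⟨?_, ?_⟩⟩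
    · exact h₁ ⟨by have := hz.1; have := min_le_left ε₁ ε₂; linarith, hz.2⟩
    · exact h₂ ⟨by have := hz.1; have := min_le_right ε₁ ε₂; linarith, hz.2⟩
  | sUnion S _ ih =>
    rintro y ⟨s, hs, hy⟩
    obtain ⟨ε, hε, h⟩ := ih s hs y hy
    exact ⟨ε, hε, fun z hz => ⟨s, hs, h hz⟩⟩

lemma genOpen_Ico {o : Set ℝ}
    (ho : TopologicalSpace.GenerateOpen {S : Set ℝ | ∃ a b : ℝ, S = Set.Ico a b} o) :
    ∀ y ∈ o, ∃ ε > 0, Ico y (y + ε) ⊆ o := by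
  induction ho with
  | basic s hs =>
    obtain ⟨a, b, rfl⟩ := hs
    intro y hy
    refine ⟨b - y, by linarith [hy.2], fun z hz => ⟨le_trans hy.1 hz.1, by linarith [hz.2]⟩⟩
  | univ => exact fun y _ => ⟨1, one_pos, fun z _ => mem_univ z⟩
  | inter s t _ _ ihs iht =>
    intro y hy
    obtain ⟨ε₁, hε₁, h₁⟩ := ihs y hy.1
    obtain ⟨ε₂, hε₂, h₂⟩ := iht y hy.2
    refine ⟨min ε₁ ε₂, lt_min hε₁ hε₂, fun z hz => ⟨?_, ?_⟩⟩
    · exact h₁ ⟨hz.1, by have := hz.2; have := min_le_left ε₁ ε₂; linarith⟩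
    · exact h₂ ⟨hz.1, by have := hz.2; have := min_le_right ε₁ ε₂; linarith⟩
  | sUnion S _ ih =>
    rintro y ⟨s, hs, hy⟩
    obtain ⟨ε, hε, h⟩ := ih s hs y hy
    exact ⟨ε, hε, fun z hz => ⟨s, hs, h hz⟩⟩

/-- lack of left-accumulation from the left-Sorgenfrey closure -/
lemma not_closure_Ioc {S : Set ℝ} {y : ℝ} (hy : y ∉ @closure ℝ sorgenfreyLeftTop S) :
    ∃ ε > 0, ∀ z, y - ε < z → z ≤ y → z ∉ S := by
  have hy' : ¬ ∀ o : Set ℝ, sorgenfreyLeftTop.IsOpen o → y ∈ o → (o ∩ S).Nonempty := by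
    letI := sorgenfreyLeftTop
    rw [mem_closure_iff] at hy
    exact hy
  push_neg at hy'
  obtain ⟨o, ho, hyo, hos⟩ := hy'
  have ho' : TopologicalSpace.GenerateOpen {S : Set ℝ | ∃ a b : ℝ, S = Set.Ioc a b} o := ho
  obtain ⟨ε, hε, h⟩ := genOpen_Ioc ho' y hyo
  refine ⟨ε, hε, fun z h1 h2 hzS => ?_⟩
  have hz : z ∈ o ∩ S := ⟨h ⟨h1, h2⟩, hzS⟩
  rw [hos] at hz
  exact hz

lemma not_closure_Ico {S : Set ℝ} {y : ℝ} (hy : y ∉ @closure ℝ sorgenfreyTop S) :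
    ∃ ε > 0, ∀ z, y ≤ z → z < y + ε → z ∉ S := by
  have hy' : ¬ ∀ o : Set ℝ, sorgenfreyTop.IsOpen o → y ∈ o → (o ∩ S).Nonempty := by
    letI := sorgenfreyTop
    rw [mem_closure_iff] at hy
    exact hy
  push_neg at hy'
  obtain ⟨o, ho, hyo, hos⟩ := hy'
  have ho' : TopologicalSpace.GenerateOpen {S : Set ℝ | ∃ a b : ℝ, S = Set.Ico a b} o := ho
  obtain ⟨ε, hε, h⟩ := genOpen_Ico ho' y hyo
  refine ⟨ε, hε, fun z h1 h2 hzS => ?_⟩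
  have hz : z ∈ o ∩ S := ⟨h ⟨h1, h2⟩, hzS⟩
  rw [hos] at hz
  exact hz


/-- the transitive neighbornet -/
def U (A₁ A₂ : Set ℝ) (F H : ℕ → Set ℝ) (N : ℕ) (y : ℝ) : Set ℝ :=
  {z | (∀ x ∈ A₂, y = x → z = x) ∧
       (∀ n ≤ N, ∀ t ∈ F n, y ∈ Ico t (qg n t) → z ∈ Ico t (qg n t)) ∧
       (∀ n ≤ N, ∀ t ∈ H n, y ∈ Ioc (pg n t) t → z ∈ Ioc (pg n t) t) ∧
       (∀ n ≤ N, ∀ t ∈ A₁, y ∈ Ioo (pg n t) (qg n t) → z ∈ Ioo (pg n t) (qg n t))}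

variable {A₁ A₂ : Set ℝ} {F H : ℕ → Set ℝ}

lemma mem_U_self (N : ℕ) (y : ℝ) : y ∈ U A₁ A₂ F H N y :=
  ⟨fun _ _ h => h, fun _ _ _ _ h => h, fun _ _ _ _ h => h, fun _ _ _ _ h => h⟩

lemma U_trans {N : ℕ} {y y' : ℝ} (h : y' ∈ U A₁ A₂ F H N y) :
    U A₁ A₂ F H N y' ⊆ U A₁ A₂ F H N y := fun z hz =>
  ⟨fun x hx hyx => hz.1 x hx (h.1 x hx hyx),
   fun n hn t ht hyt => hz.2.1 n hn t ht (h.2.1 n hn t ht hyt),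
   fun n hn t ht hyt => hz.2.2.1 n hn t ht (h.2.2.1 n hn t ht hyt),
   fun n hn t ht hyt => hz.2.2.2 n hn t ht (h.2.2.2 n hn t ht hyt)⟩

lemma U_mono {M N : ℕ} (h : M ≤ N) (y : ℝ) : U A₁ A₂ F H N y ⊆ U A₁ A₂ F H M y :=
  fun z hz =>
  ⟨hz.1, fun n hn => hz.2.1 n (hn.trans h), fun n hn => hz.2.2.1 n (hn.trans h),
   fun n hn => hz.2.2.2 n (hn.trans h)⟩

lemma U_A2 {N : ℕ} {y : ℝ} (hy : y ∈ A₂) : U A₁ A₂ F H N y ⊆ {y} :=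
  fun _ hz => (hz.1 y hy rfl)

lemma U_small_A3 {N : ℕ} {y : ℝ} (hyF : y ∈ F N) : U A₁ A₂ F H N y ⊆ Ico y (qg N y) :=
  fun _ hz => hz.2.1 N le_rfl y hyF ⟨le_refl y, lt_qg N y⟩

lemma U_small_A4 {N : ℕ} {y : ℝ} (hyH : y ∈ H N) : U A₁ A₂ F H N y ⊆ Ioc (pg N y) y :=
  fun _ hz => hz.2.2.1 N le_rfl y hyH ⟨pg_lt N y, le_refl y⟩

lemma U_small_A1 {N : ℕ} {y : ℝ} (hy : y ∈ A₁) : U A₁ A₂ F H N y ⊆ Ioo (pg N y) (qg N y) :=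
  fun _ hz => hz.2.2.2 N le_rfl y hy ⟨pg_lt N y, lt_qg N y⟩

lemma nbhd_A4 {N : ℕ} {y ε : ℝ} (hy2 : y ∉ A₂) (hε : 0 < ε)
    (hεF : ∀ n ≤ N, ∀ z, y - ε < z → z ≤ y → z ∉ F n) :
    Ioc (max (y - ε) (pg N y)) y ⊆ U A₁ A₂ F H N y := by
  rintro z ⟨hz1, hz2⟩
  rw [max_lt_iff] at hz1
  refine ⟨fun x hx hyx => absurd (hyx ▸ hx) hy2, ?_, ?_, ?_⟩
  · rintro n hn t ht ⟨hty, hyq⟩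
    have hty' : t ≤ y - ε := by
      by_contra hc
      push_neg at hc
      exact hεF n hn t hc hty ht
    exact ⟨le_of_lt (lt_of_le_of_lt hty' hz1.1), lt_of_le_of_lt hz2 hyq⟩
  · rintro n hn t ht ⟨hpt, hyt⟩
    exact ⟨lt_of_le_of_lt ((pg_absorb hn hpt).trans (le_refl _)) hz1.2, hz2.trans hyt⟩
  · rintro n hn t ht ⟨hpt, hyq⟩
    exact ⟨lt_of_le_of_lt (pg_absorb hn hpt) hz1.2, lt_of_le_of_lt hz2 hyq⟩

lemma nbhd_A3 {N : ℕ} {y ε : ℝ} (hy2 : y ∉ A₂) (hε : 0 < ε)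
    (hεH : ∀ n ≤ N, ∀ z, y ≤ z → z < y + ε → z ∉ H n) :
    Ico y (min (y + ε) (qg N y)) ⊆ U A₁ A₂ F H N y := by
  rintro z ⟨hz1, hz2⟩
  rw [lt_min_iff] at hz2
  refine ⟨fun x hx hyx => absurd (hyx ▸ hx) hy2, ?_, ?_, ?_⟩
  · rintro n hn t ht ⟨hty, hyq⟩
    exact ⟨hty.trans hz1, lt_of_lt_of_le hz2.2 (qg_absorb hn hyq)⟩
  · rintro n hn t ht ⟨hpt, hyt⟩
    have hty' : y + ε ≤ t := by
      by_contra hc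
      push_neg at hc
      exact hεH n hn t hyt hc ht
    exact ⟨lt_of_lt_of_le hpt hz1, le_of_lt (lt_of_lt_of_le hz2.1 hty')⟩
  · rintro n hn t ht ⟨hpt, hyq⟩
    exact ⟨lt_of_lt_of_le hpt hz1, lt_of_lt_of_le hz2.2 (qg_absorb hn hyq)⟩

lemma nbhd_A1 {N : ℕ} {y ε₁ ε₂ : ℝ} (hy2 : y ∉ A₂)
    (hεF : ∀ n ≤ N, ∀ z, y - ε₁ < z → z ≤ y → z ∉ F n)
    (hεH : ∀ n ≤ N, ∀ z, y ≤ z → z < y + ε₂ → z ∉ H n) :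
    Ioo (max (y - ε₁) (pg N y)) (min (y + ε₂) (qg N y)) ⊆ U A₁ A₂ F H N y := by
  rintro z ⟨hz1, hz2⟩
  rw [max_lt_iff] at hz1
  rw [lt_min_iff] at hz2
  refine ⟨fun x hx hyx => absurd (hyx ▸ hx) hy2, ?_, ?_, ?_⟩
  · rintro n hn t ht ⟨hty, hyq⟩
    have hty' : t ≤ y - ε₁ := by
      by_contra hc
      push_neg at hc
      exact hεF n hn t hc hty ht
    exact ⟨le_of_lt (lt_of_le_of_lt hty' hz1.1), lt_of_lt_of_le hz2.2 (qg_absorb hn hyq)⟩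
  · rintro n hn t ht ⟨hpt, hyt⟩
    have hty' : y + ε₂ ≤ t := by
      by_contra hc
      push_neg at hc
      exact hεH n hn t hyt hc ht
    exact ⟨lt_of_le_of_lt (pg_absorb hn hpt) hz1.2, le_of_lt (lt_of_lt_of_le hz2.1 hty')⟩
  · rintro n hn t ht ⟨hpt, hyq⟩
    exact ⟨lt_of_le_of_lt (pg_absorb hn hpt) hz1.2, lt_of_lt_of_le hz2.2 (qg_absorb hn hyq)⟩

end
end HybridAux

open HybridAux

/-- **Theorem 2.5.** If `A₃` is a countable union of sets whose `𝕊←`-closures lie in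
`A₂ ∪ A₃`, and `A₄` is a countable union of sets whose `𝕊`-closures lie in `A₂ ∪ A₄`,
then the hybrid space `H₄(𝒜)` is non-archimedeanly quasi-metrizable. -/
theorem hybrid_naQuasiMetrizable_of_sigma_closures
    (A₁ A₂ A₃ A₄ : Set ℝ) (hcov : Is4Cover A₁ A₂ A₃ A₄)
    (hF : ∃ F : ℕ → Set ℝ, (∀ n, F n ⊆ A₃) ∧ A₃ = ⋃ n, F n ∧
      ∀ n, @closure ℝ sorgenfreyLeftTop (F n) ⊆ A₂ ∪ A₃)
    (hH : ∃ H : ℕ → Set ℝ, (∀ n, H n ⊆ A₄) ∧ A₄ = ⋃ n, H n ∧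
      ∀ n, @closure ℝ sorgenfreyTop (H n) ⊆ A₂ ∪ A₄) :
    NAQuasiMetrizableTop (hybridTop A₁ A₂ A₃ A₄) := by
  classical
  obtain ⟨hcover, h12, h13, h14, h23, h24, h34⟩ := hcov
  obtain ⟨F, hFmono, hF3, hyF, hFc⟩ :
      ∃ F : ℕ → Set ℝ, (∀ m n : ℕ, m ≤ n → F m ⊆ F n) ∧ (∀ n, F n ⊆ A₃) ∧
        (∀ y ∈ A₃, ∃ n, y ∈ F n) ∧
        (∀ n, @closure ℝ sorgenfreyLeftTop (F n) ⊆ A₂ ∪ A₃) := by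
    obtain ⟨F₀, hF₀3, hF₀U, hF₀c⟩ := hF
    refine ⟨cum F₀, fun m n h => cum_mono F₀ h, cum_subset hF₀3, ?_, cum_closure hF₀c⟩
    intro y hy
    obtain ⟨n, hn⟩ := mem_iUnion.1 (hF₀U ▸ hy)
    exact ⟨n, subset_cum F₀ n hn⟩
  obtain ⟨H, hHmono, hH4, hyH, hHc⟩ :
      ∃ H : ℕ → Set ℝ, (∀ m n : ℕ, m ≤ n → H m ⊆ H n) ∧ (∀ n, H n ⊆ A₄) ∧
        (∀ y ∈ A₄, ∃ n, y ∈ H n) ∧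
        (∀ n, @closure ℝ sorgenfreyTop (H n) ⊆ A₂ ∪ A₄) := by
    obtain ⟨H₀, hH₀4, hH₀U, hH₀c⟩ := hH
    refine ⟨cum H₀, fun m n h => cum_mono H₀ h, cum_subset hH₀4, ?_, cum_closure hH₀c⟩
    intro y hy
    obtain ⟨n, hn⟩ := mem_iUnion.1 (hH₀U ▸ hy)
    exact ⟨n, subset_cum H₀ n hn⟩
  have classOf : ∀ y : ℝ, y ∈ A₁ ∨ y ∈ A₂ ∨ y ∈ A₃ ∨ y ∈ A₄ := by
    intro y
    have : y ∈ A₁ ∪ A₂ ∪ A₃ ∪ A₄ := hcover.symm ▸ mem_univ y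
    simpa [Set.mem_union, or_assoc] using this
  have hFa : ∀ N : ℕ, ∀ y, y ∉ A₂ → y ∉ A₃ →
      ∃ ε > 0, ∀ n ≤ N, ∀ z, y - ε < z → z ≤ y → z ∉ F n := by
    intro N y hy2 hy3
    have hyc : y ∉ @closure ℝ sorgenfreyLeftTop (F N) := fun hc => (hFc N hc).elim hy2 hy3
    obtain ⟨ε, hε, h⟩ := not_closure_Ioc hyc
    exact ⟨ε, hε, fun n hn z h1 h2 hz => h z h1 h2 (hFmono n N hn hz)⟩
  have hHa : ∀ N : ℕ, ∀ y, y ∉ A₂ → y ∉ A₄ →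
      ∃ ε > 0, ∀ n ≤ N, ∀ z, y ≤ z → z < y + ε → z ∉ H n := by
    intro N y hy2 hy4
    have hyc : y ∉ @closure ℝ sorgenfreyTop (H N) := fun hc => (hHc N hc).elim hy2 hy4
    obtain ⟨ε, hε, h⟩ := not_closure_Ico hyc
    exact ⟨ε, hε, fun n hn z h1 h2 hz => h z h1 h2 (hHmono n N hn hz)⟩
  set G : Set (Set ℝ) :=
    ({S : Set ℝ | ∃ x ∈ A₁, ∃ ε : ℝ, 0 < ε ∧ S = Set.Ioo (x - ε) (x + ε)} ∪
     {S : Set ℝ | ∃ x ∈ A₂, S = {x}} ∪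
     {S : Set ℝ | ∃ x ∈ A₃, ∃ ε : ℝ, 0 < ε ∧ S = Set.Ico x (x + ε)} ∪
     {S : Set ℝ | ∃ x ∈ A₄, ∃ ε : ℝ, 0 < ε ∧ S = Set.Ioc (x - ε) x}) with hG
  have nbhdU : ∀ (N : ℕ) (y : ℝ), ∃ g, g ∈ G ∧ y ∈ g ∧ g ⊆ U A₁ A₂ F H N y := by
    intro N y
    rcases classOf y with hy|hy|hy|hy
    · have hy2 : y ∉ A₂ := Set.disjoint_left.1 h12 hy
      have hy3 : y ∉ A₃ := Set.disjoint_left.1 h13 hy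
      have hy4 : y ∉ A₄ := Set.disjoint_left.1 h14 hy
      obtain ⟨ε₁, hε₁, hF'⟩ := hFa N y hy2 hy3
      obtain ⟨ε₂, hε₂, hH'⟩ := hHa N y hy2 hy4
      have ha : max (y - ε₁) (pg N y) < y := max_lt (by linarith) (pg_lt N y)
      have hb : y < min (y + ε₂) (qg N y) := lt_min (by linarith) (lt_qg N y)
      set a := max (y - ε₁) (pg N y)
      set b := min (y + ε₂) (qg N y)
      have hδ : 0 < min (y - a) (b - y) := lt_min (by linarith) (by linarith)
      set δ := min (y - a) (b - y)
      have hd1 : δ ≤ y - a := min_le_left _ _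
      have hd2 : δ ≤ b - y := min_le_right _ _
      refine ⟨Ioo (y - δ) (y + δ), ?_, ⟨by linarith, by linarith⟩, ?_⟩
      · exact Or.inl (Or.inl (Or.inl ⟨y, hy, δ, hδ, rfl⟩))
      · intro z hz
        exact nbhd_A1 hy2 hF' hH' ⟨by linarith [hz.1], by linarith [hz.2]⟩
    · refine ⟨{y}, Or.inl (Or.inl (Or.inr ⟨y, hy, rfl⟩)), rfl, ?_⟩
      exact singleton_subset_iff.2 (mem_U_self N y)
    · have hy2 : y ∉ A₂ := Set.disjoint_right.1 h23 hy
      have hy4 : y ∉ A₄ := Set.disjoint_left.1 h34 hy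
      obtain ⟨ε, hε, hH'⟩ := hHa N y hy2 hy4
      have hb : y < min (y + ε) (qg N y) := lt_min (by linarith) (lt_qg N y)
      set b := min (y + ε) (qg N y)
      refine ⟨Ico y b, ?_, ⟨le_refl y, hb⟩, ?_⟩
      · refine Or.inl (Or.inr ⟨y, hy, b - y, by linarith, ?_⟩)
        rw [show y + (b - y) = b by ring]
      · exact nbhd_A3 hy2 hε hH'
    · have hy2 : y ∉ A₂ := Set.disjoint_right.1 h24 hy
      have hy3 : y ∉ A₃ := Set.disjoint_right.1 h34 hy
      obtain ⟨ε, hε, hF'⟩ := hFa N y hy2 hy3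
      have ha : max (y - ε) (pg N y) < y := max_lt (by linarith) (pg_lt N y)
      set a := max (y - ε) (pg N y)
      refine ⟨Ioc a y, ?_, ⟨ha, le_refl y⟩, ?_⟩
      · refine Or.inr ⟨y, hy, y - a, by linarith, ?_⟩
        rw [show y - (y - a) = a by ring]
      · exact nbhd_A4 hy2 hε hF'
  have U_open : ∀ (N : ℕ) (x : ℝ),
      (TopologicalSpace.generateFrom G).IsOpen (U A₁ A₂ F H N x) := by
    intro N x
    apply gen_open
    intro y hy
    obtain ⟨g, hg, hyg, hgU⟩ := nbhdU N y
    exact ⟨g, hg, hyg, hgU.trans (U_trans hy)⟩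
  have hpow : ∀ η : ℝ, 0 < η → ∃ k : ℕ, ((2:ℝ) ^ k)⁻¹ < η := by
    intro η hη
    obtain ⟨k, hk⟩ := exists_pow_lt_of_lt_one hη (by norm_num : (2:ℝ)⁻¹ < 1)
    exact ⟨k, by rwa [inv_pow] at hk⟩
  have hmono2 : ∀ k N : ℕ, k ≤ N → ((2:ℝ) ^ N)⁻¹ ≤ ((2:ℝ) ^ k)⁻¹ := by
    intro k N h
    apply inv_anti₀ (two_pow_pos k)
    exact pow_le_pow_right₀ one_le_two h
  have shrink3 : ∀ y ∈ A₃, ∀ η : ℝ, 0 < η → ∃ N, U A₁ A₂ F H N y ⊆ Ico y (y + η) := by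
    intro y hy η hη
    obtain ⟨m, hm⟩ := hyF y hy
    obtain ⟨k, hk⟩ := hpow η hη
    refine ⟨max m k, ?_⟩
    intro z hz
    have h1 := U_small_A3 (hFmono m (max m k) (le_max_left m k) hm) hz
    have h2 := qg_le (max m k) y
    have h3 := hmono2 k (max m k) (le_max_right m k)
    exact ⟨h1.1, by linarith [h1.2]⟩
  have shrink4 : ∀ y ∈ A₄, ∀ η : ℝ, 0 < η → ∃ N, U A₁ A₂ F H N y ⊆ Ioc (y - η) y := by
    intro y hy η hη
    obtain ⟨m, hm⟩ := hyH y hy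
    obtain ⟨k, hk⟩ := hpow η hη
    refine ⟨max m k, ?_⟩
    intro z hz
    have h1 := U_small_A4 (hHmono m (max m k) (le_max_left m k) hm) hz
    have h2 := le_pg (max m k) y
    have h3 := hmono2 k (max m k) (le_max_right m k)
    exact ⟨by linarith [h1.1], h1.2⟩
  have shrink1 : ∀ y ∈ A₁, ∀ η : ℝ, 0 < η → ∃ N, U A₁ A₂ F H N y ⊆ Ioo (y - η) (y + η) := by
    intro y hy η hη
    obtain ⟨k, hk⟩ := hpow η hη
    refine ⟨k, ?_⟩
    intro z hz
    have h1 := U_small_A1 hy hz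
    have h2 := qg_le k y
    have h3 := le_pg k y
    exact ⟨by linarith [h1.1], by linarith [h1.2]⟩
  have shrinkAll : ∀ x : ℝ, ∀ η : ℝ, 0 < η → ∃ N, U A₁ A₂ F H N x ⊆ Ioo (x - η) (x + η) := by
    intro x η hη
    rcases classOf x with hx|hx|hx|hx
    · exact shrink1 x hx η hη
    · exact ⟨0, (U_A2 hx).trans (singleton_subset_iff.2 ⟨by linarith, by linarith⟩)⟩
    · obtain ⟨N, hN⟩ := shrink3 x hx η hη
      exact ⟨N, hN.trans (fun z hz => ⟨by linarith [hz.1], hz.2⟩)⟩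
    · obtain ⟨N, hN⟩ := shrink4 x hx η hη
      exact ⟨N, hN.trans (fun z hz => ⟨hz.1, by linarith [hz.2]⟩)⟩
  set ρ : ℝ → ℝ → ℝ := fun x y =>
    if h : ∃ N, y ∉ U A₁ A₂ F H N x then (2⁻¹:ℝ) ^ Nat.find h else 0 with hρ
  have rho_nonneg : ∀ x y, 0 ≤ ρ x y := by
    intro x y
    simp only [hρ]
    split <;> positivity
  have rho_le_one : ∀ x y, ρ x y ≤ 1 := by
    intro x y
    simp only [hρ]
    split
    · exact pow_le_one₀ (by norm_num) (by norm_num)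
    · norm_num
  have rho_self : ∀ x, ρ x x = 0 := by
    intro x
    simp only [hρ]
    rw [dif_neg]
    push_neg
    exact fun N => mem_U_self N x
  have key : ∀ x z k, ρ x z < (2⁻¹:ℝ) ^ k → z ∈ U A₁ A₂ F H k x := by
    intro x z k h
    simp only [hρ] at h
    split_ifs at h with hd
    · have hk : k < Nat.find hd := by
        by_contra hc
        push_neg at hc
        have := pow_le_pow_of_le_one (by norm_num : (0:ℝ) ≤ 2⁻¹) (by norm_num) hc
        linarith
      exact not_not.1 (Nat.find_min hd hk)
    · push_neg at hd
      exact hd k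
  have rho_eq_zero : ∀ x y, ρ x y = 0 ↔ x = y := by
    intro x y
    constructor
    · intro h
      by_contra hne
      rw [hρ] at h
      simp only at h
      split_ifs at h with hd
      · exact absurd h (by positivity)
      · push_neg at hd
        have hxy : 0 < |y - x| := abs_pos.2 (sub_ne_zero.2 (fun hc => hne hc.symm))
        obtain ⟨N, hN⟩ := shrinkAll x _ hxy
        have hmem := hN (hd N)
        have : |y - x| < |y - x| := abs_lt.2 ⟨by linarith [hmem.1], by linarith [hmem.2]⟩
        exact lt_irrefl _ this
    · rintro rfl
      exact rho_self x
  have na : ∀ x y z, ρ x y ≤ max (ρ x z) (ρ z y) := by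
    intro x y z
    rcases le_or_gt (ρ x y) (max (ρ x z) (ρ z y)) with h|h
    · exact h
    exfalso
    have hxz : ρ x z < ρ x y := lt_of_le_of_lt (le_max_left _ _) h
    have hzy : ρ z y < ρ x y := lt_of_le_of_lt (le_max_right _ _) h
    have hd : ∃ N, y ∉ U A₁ A₂ F H N x := by
      by_contra hc
      have h0 : ρ x y = 0 := by simp only [hρ]; exact dif_neg hc
      rw [h0] at hxz
      linarith [rho_nonneg x z]
    have hval : ρ x y = (2⁻¹:ℝ) ^ Nat.find hd := by simp only [hρ]; rw [dif_pos hd]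
    rw [hval] at hxz hzy
    exact Nat.find_spec hd (U_trans (key x z _ hxz) (key z y _ hzy))
  have ball_eq : ∀ x : ℝ, ∀ r : ℝ, 0 < r →
      {y | ρ x y < r} = univ ∨ ∃ N, {y | ρ x y < r} = U A₁ A₂ F H N x := by
    intro x r hr
    have hm : ∃ M : ℕ, (2⁻¹:ℝ) ^ M < r :=
      exists_pow_lt_of_lt_one hr (by norm_num : (2:ℝ)⁻¹ < 1)
    rcases hMeq : Nat.find hm with _ | M'
    · left
      ext y
      simp only [mem_setOf_eq, mem_univ, iff_true]
      have h0 : (2⁻¹:ℝ) ^ (Nat.find hm) < r := Nat.find_spec hm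
      rw [hMeq] at h0
      simp only [pow_zero] at h0
      exact lt_of_le_of_lt (rho_le_one x y) h0
    · right
      refine ⟨M', ?_⟩
      ext y
      simp only [mem_setOf_eq]
      constructor
      · intro hy
        have hlt : M' < Nat.find hm := by rw [hMeq]; exact Nat.lt_succ_self M'
        have hnlt := Nat.find_min hm hlt
        push_neg at hnlt
        exact key x y M' (lt_of_lt_of_le hy hnlt)
      · intro hy
        simp only [hρ]
        split_ifs with hd
        · have hk : M' + 1 ≤ Nat.find hd := by
            by_contra hc
            push_neg at hc
            exact Nat.find_spec hd (U_mono (Nat.lt_succ_iff.1 hc) x hy)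
          have h1 : (2⁻¹:ℝ) ^ Nat.find hd ≤ (2⁻¹:ℝ) ^ (M' + 1) :=
            pow_le_pow_of_le_one (by norm_num) (by norm_num) hk
          have h2 : (2⁻¹:ℝ) ^ (Nat.find hm) < r := Nat.find_spec hm
          rw [hMeq] at h2
          exact lt_of_le_of_lt h1 h2
        · exact hr
  have inner : ∀ S ∈ G, ∀ y ∈ S, ∃ N, U A₁ A₂ F H N y ⊆ S := by
    rw [hG]
    rintro S (((⟨x, hx1, ε, hε, rfl⟩ | ⟨x, hx2, rfl⟩) | ⟨x, hx3, ε, hε, rfl⟩) |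
      ⟨x, hx4, ε, hε, rfl⟩) y hyS
    · rcases classOf y with hy|hy|hy|hy
      · have hd1 := min_le_left (y - (x - ε)) (x + ε - y)
        have hd2 := min_le_right (y - (x - ε)) (x + ε - y)
        obtain ⟨N, hN⟩ := shrink1 y hy (min (y - (x - ε)) (x + ε - y))
          (lt_min (by linarith [hyS.1]) (by linarith [hyS.2]))
        exact ⟨N, hN.trans (fun z hz => ⟨by linarith [hz.1], by linarith [hz.2]⟩)⟩
      · exact ⟨0, (U_A2 hy).trans (singleton_subset_iff.2 hyS)⟩
      · obtain ⟨N, hN⟩ := shrink3 y hy (x + ε - y) (by linarith [hyS.2])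
        exact ⟨N, hN.trans (fun z hz => ⟨by linarith [hyS.1, hz.1], by linarith [hz.2]⟩)⟩
      · obtain ⟨N, hN⟩ := shrink4 y hy (y - (x - ε)) (by linarith [hyS.1])
        exact ⟨N, hN.trans (fun z hz => ⟨by linarith [hz.1], by linarith [hz.2, hyS.2]⟩)⟩
    · have hyx : y = x := hyS
      subst hyx
      exact ⟨0, U_A2 hx2⟩
    · rcases classOf y with hy|hy|hy|hy
      · have hxy : x < y :=
          lt_of_le_of_ne hyS.1 (fun h => Set.disjoint_left.1 h13 hy (h ▸ hx3))
        have hd1 := min_le_left (y - x) (x + ε - y)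
        have hd2 := min_le_right (y - x) (x + ε - y)
        obtain ⟨N, hN⟩ := shrink1 y hy (min (y - x) (x + ε - y))
          (lt_min (by linarith) (by linarith [hyS.2]))
        exact ⟨N, hN.trans (fun z hz => ⟨by linarith [hz.1], by linarith [hz.2]⟩)⟩
      · exact ⟨0, (U_A2 hy).trans (singleton_subset_iff.2 hyS)⟩
      · obtain ⟨N, hN⟩ := shrink3 y hy (x + ε - y) (by linarith [hyS.2])
        exact ⟨N, hN.trans (fun z hz => ⟨le_trans hyS.1 hz.1, by linarith [hz.2]⟩)⟩
      · have hxy : x < y :=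
          lt_of_le_of_ne hyS.1 (fun h => Set.disjoint_left.1 h34 (h ▸ hx3) hy)
        obtain ⟨N, hN⟩ := shrink4 y hy (y - x) (by linarith)
        exact ⟨N, hN.trans (fun z hz =>
          ⟨by linarith [hz.1], lt_of_le_of_lt hz.2 hyS.2⟩)⟩
    · rcases classOf y with hy|hy|hy|hy
      · have hxy : y < x :=
          lt_of_le_of_ne hyS.2 (fun h => Set.disjoint_left.1 h14 hy (h ▸ hx4))
        have hd1 := min_le_left (y - (x - ε)) (x - y)
        have hd2 := min_le_right (y - (x - ε)) (x - y)
        obtain ⟨N, hN⟩ := shrink1 y hy (min (y - (x - ε)) (x - y))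
          (lt_min (by linarith [hyS.1]) (by linarith))
        exact ⟨N, hN.trans (fun z hz => ⟨by linarith [hz.1], by linarith [hz.2]⟩)⟩
      · exact ⟨0, (U_A2 hy).trans (singleton_subset_iff.2 hyS)⟩
      · have hxy : y < x :=
          lt_of_le_of_ne hyS.2 (fun h => Set.disjoint_left.1 h34 hy (h ▸ hx4))
        obtain ⟨N, hN⟩ := shrink3 y hy (x - y) (by linarith)
        exact ⟨N, hN.trans (fun z hz =>
          ⟨lt_of_lt_of_le hyS.1 hz.1, by linarith [hz.2]⟩)⟩
      · obtain ⟨N, hN⟩ := shrink4 y hy (y - (x - ε)) (by linarith [hyS.1])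
        exact ⟨N, hN.trans (fun z hz => ⟨by linarith [hz.1], hz.2.trans hyS.2⟩)⟩
  refine ⟨ρ, ⟨⟨rho_nonneg, rho_eq_zero, fun x y z =>
    (na x y z).trans (max_le_add_of_nonneg (rho_nonneg x z) (rho_nonneg z y))⟩, na⟩, ?_⟩
  have hhyb : hybridTop A₁ A₂ A₃ A₄ = TopologicalSpace.generateFrom G := by
    rw [hybridTop, hG]
  rw [hhyb]
  apply le_antisymm
  · rw [quasiMetricTop, TopologicalSpace.le_generateFrom_iff_subset_isOpen]
    rintro B ⟨x, r, hr, rfl⟩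
    rcases ball_eq x r hr with h|⟨N, h⟩
    · show (TopologicalSpace.generateFrom G).IsOpen _
      rw [h]
      exact (TopologicalSpace.generateFrom G).isOpen_univ
    · show (TopologicalSpace.generateFrom G).IsOpen _
      rw [h]
      exact U_open N x
  · rw [TopologicalSpace.le_generateFrom_iff_subset_isOpen]
    intro S hS
    show (quasiMetricTop ρ).IsOpen S
    rw [quasiMetricTop]
    apply gen_open
    intro y hyS
    obtain ⟨N, hN⟩ := inner S hS y hyS
    refine ⟨{z | ρ y z < (2⁻¹:ℝ) ^ N}, ⟨y, (2⁻¹:ℝ) ^ N, by positivity, rfl⟩, ?_,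
      fun z hz => hN (key y z N hz)⟩
    show ρ y y < (2⁻¹:ℝ) ^ N
    rw [rho_self]
    positivity
end

section
/- Let 𝒜 = {A₁, A₂, A₃, A₄} be a 4-cover of ℝ. If A₃ is of type F_σ in 𝕊← (a countable union of sets closed in 𝕊←) and A₄ is of type F_σ in 𝕊 (a countable union of sets closed in 𝕊), then the hybrid space H₄(𝒜) is non-archimedeanly quasi-metrizable. -/
open Set

/-!
Write `A₃ = ⋃ Fₙ` and `A₄ = ⋃ Hₙ`. At level `n` every `x` gets a basic hybrid neighbourhood `Vₙ x`
of the shape prescribed by the piece `Aᵢ ∋ x`, cut down to a dyadic interval of length about `2⁻ⁿ`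
and, on each side where it extends beyond `x`, so short that it misses the `𝕊←`-closed set
`Fₙ ⊆ A₃` (on the left) or the `𝕊`-closed set `Hₙ ⊆ A₄` (on the right).
Then the chains of `Vₙ` starting at `x` stay in the dyadic cell of `x`, and when `x ∈ Fₙ` they can
never move to the left of `x`. Setting `ρ(x, y) = 2⁻ⁿ` for the first `n` at which no `Vₙ`-chain
leads from `x` to `y` gives a non-archimedean quasi-metric, and these two facts say that its balls
at `x ∈ A₃` are as small as the half-open intervals `[x, x + ε)`.
-/

open Set Filter Topology
open TopologicalSpace (isOpen_generateFrom_of_mem)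

namespace Neighbornet

variable {X : Type*}

def reach (W : X → Set X) (x : X) : Set X :=
  {y | Relation.ReflTransGen (fun a b => b ∈ W a) x y}

variable {W : X → Set X} {x y : X}

theorem mem_reach_self : x ∈ reach W x :=
  Relation.ReflTransGen.refl

theorem subset_reach : W x ⊆ reach W x :=
  fun _ hy => Relation.ReflTransGen.single hy

theorem reach_subset_reach (hy : y ∈ reach W x) : reach W y ⊆ reach W x :=
  fun _ hz => Relation.ReflTransGen.trans hy hz

theorem reach_subset {S : Set X} (hx : x ∈ S) (hS : ∀ y ∈ S, W y ⊆ S) : reach W x ⊆ S := by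
  intro y hy
  induction hy with
  | refl => exact hx
  | tail _ hbc ih => exact hS _ ih hbc

open Classical in
noncomputable def reachDist (W : ℕ → X → Set X) (x y : X) : ℝ :=
  if h : ∃ n, y ∉ reach (W n) x then 2⁻¹ ^ Nat.find h else 0

variable {W : ℕ → X → Set X}

theorem reachDist_nonneg : 0 ≤ reachDist W x y := by
  unfold reachDist
  split <;> positivity

theorem reachDist_eq_zero_or (W : ℕ → X → Set X) (x y : X) :
    reachDist W x y = 0 ∨ ∃ n, reachDist W x y = 2⁻¹ ^ n := by
  unfold reachDist
  split
  exacts [Or.inr ⟨_, rfl⟩, Or.inl rfl]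

theorem reachDist_eq_zero_iff : reachDist W x y = 0 ↔ ∀ n, y ∈ reach (W n) x := by
  unfold reachDist
  split_ifs with h <;> simpa using h

theorem reachDist_lt_pow_iff {n : ℕ} :
    reachDist W x y < 2⁻¹ ^ n ↔ ∀ m ≤ n, y ∈ reach (W m) x := by
  classical
  unfold reachDist
  split_ifs with h
  · rw [pow_lt_pow_iff_right_of_lt_one₀ (by norm_num) (by norm_num), Nat.lt_find_iff h n]
    simp only [not_not]
  · simp only [not_exists, not_not] at h
    exact iff_of_true (by positivity) fun m _ => h m

theorem reachDist_le_max (x y z : X) :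
    reachDist W x y ≤ max (reachDist W x z) (reachDist W z y) := by
  rcases reachDist_eq_zero_or W x y with h | ⟨n, h⟩
  · exact h ▸ le_max_of_le_left reachDist_nonneg
  refine le_of_not_gt fun hlt => ?_
  rw [h, max_lt_iff, reachDist_lt_pow_iff, reachDist_lt_pow_iff] at hlt
  have : reachDist W x y < 2⁻¹ ^ n :=
    reachDist_lt_pow_iff.2 fun m hm => reach_subset_reach (hlt.1 m hm) (hlt.2 m hm)
  exact this.ne h

theorem isNAQuasiMetric_reachDist (hsep : ∀ x y, x ≠ y → ∃ n, y ∉ reach (W n) x) :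
    IsNAQuasiMetric (reachDist W) := by
  refine ⟨⟨fun _ _ => reachDist_nonneg, fun x y => ⟨fun h => ?_, ?_⟩, fun x y z => ?_⟩,
    reachDist_le_max⟩
  · by_contra hxy
    obtain ⟨n, hn⟩ := hsep x y hxy
    exact hn (reachDist_eq_zero_iff.1 h n)
  · rintro rfl
    exact reachDist_eq_zero_iff.2 fun _ => mem_reach_self
  · exact (reachDist_le_max x y z).trans
      (max_le_add_of_nonneg reachDist_nonneg reachDist_nonneg)

/-- The `reachDist`-balls around `x` form a basis of this filter. -/
def reachNhds (W : ℕ → X → Set X) (x : X) : Filter X :=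
  ⨅ n, 𝓟 (reach (W n) x)

theorem reach_mem_reachNhds (n : ℕ) : reach (W n) x ∈ reachNhds W x :=
  mem_iInf_of_mem n (mem_principal_self _)

theorem exists_ball_subset_of_mem_reachNhds {U : Set X} (hU : U ∈ reachNhds W x) :
    ∃ n : ℕ, {y | reachDist W x y < 2⁻¹ ^ n} ⊆ U := by
  obtain ⟨I, hI, hIU⟩ := (hasBasis_iInf_principal_finite _).mem_iff.1 hU
  obtain ⟨n, hn⟩ := hI.bddAbove
  exact ⟨n, fun y hy => hIU (mem_iInter₂.2 fun m hm => reachDist_lt_pow_iff.1 hy m (hn hm))⟩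

theorem reachDist_ball_mem_nhds [TopologicalSpace X] (hW : ∀ n x, W n x ∈ 𝓝 x) (n : ℕ) :
    {y | reachDist W x y < 2⁻¹ ^ n} ∈ 𝓝 x := by
  simp only [reachDist_lt_pow_iff]
  exact (eventually_all_finite (finite_Iic n)).2 fun m _ => mem_of_superset (hW m x) subset_reach

theorem generateFrom_eq_quasiMetricTop_reachDist {g : Set (Set X)}
    (hW : ∀ n x, W n x ∈ @nhds X (.generateFrom g) x)
    (hg : ∀ s ∈ g, ∀ x ∈ s, s ∈ reachNhds W x) :
    TopologicalSpace.generateFrom g = quasiMetricTop (reachDist W) := by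
  apply le_antisymm
  · let _ := TopologicalSpace.generateFrom g
    refine le_generateFrom ?_
    rintro _ ⟨x, r, hr, rfl⟩
    refine isOpen_iff_mem_nhds.2 fun y hy => ?_
    obtain ⟨n, hn⟩ := exists_pow_lt_of_lt_one hr (by norm_num : (2⁻¹ : ℝ) < 1)
    exact mem_of_superset (reachDist_ball_mem_nhds hW n) fun z hz =>
      (reachDist_le_max x z y).trans_lt (max_lt hy (hz.trans hn))
  · let _ := quasiMetricTop (reachDist W)
    refine le_generateFrom fun s hs => isOpen_iff_mem_nhds.2 fun x hx => ?_
    obtain ⟨n, hn⟩ := exists_ball_subset_of_mem_reachNhds (hg s hs x hx)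
    have hball : IsOpen {y | reachDist W x y < 2⁻¹ ^ n} :=
      isOpen_generateFrom_of_mem ⟨x, _, by positivity, rfl⟩
    have hx : reachDist W x x < 2⁻¹ ^ n := by
      rw [reachDist_eq_zero_iff.2 fun _ => mem_reach_self]
      positivity
    exact mem_of_superset (hball.mem_nhds hx) hn

end Neighbornet

namespace Hybrid

open Neighbornet

/-- For non-integral `u` this is `(⌊u⌋, ⌈u⌉)`, for integral `u` it is `(u - 1, u + 1)`. -/
def unitCell (u : ℝ) : Set ℝ :=
  Ioo ((⌈u⌉ : ℝ) - 1) ((⌊u⌋ : ℝ) + 1)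

theorem mem_unitCell_self (u : ℝ) : u ∈ unitCell u :=
  ⟨by linarith [Int.ceil_lt_add_one u], Int.lt_floor_add_one u⟩

theorem unitCell_subset {u v : ℝ} (hv : v ∈ unitCell u) : unitCell v ⊆ unitCell u := by
  have hceil : ⌈u⌉ ≤ ⌈v⌉ := by
    have : ⌈u⌉ - 1 < ⌈v⌉ := Int.lt_ceil.2 (by push_cast; exact hv.1)
    omega
  have hfloor : ⌊v⌋ ≤ ⌊u⌋ := by
    have : ⌊v⌋ < ⌊u⌋ + 1 := Int.floor_lt.2 (by push_cast; exact hv.2)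
    omega
  have hceil' : (⌈u⌉ : ℝ) ≤ ⌈v⌉ := by exact_mod_cast hceil
  have hfloor' : (⌊v⌋ : ℝ) ≤ ⌊u⌋ := by exact_mod_cast hfloor
  exact Ioo_subset_Ioo (by linarith) (by linarith)

theorem unitCell_subset_Ioo (u : ℝ) : unitCell u ⊆ Ioo (u - 1) (u + 1) :=
  Ioo_subset_Ioo (by linarith [Int.le_ceil u]) (by linarith [Int.floor_le u])

def dyadicCell (n : ℕ) (x : ℝ) : Set ℝ :=
  (· * 2 ^ n) ⁻¹' unitCell (x * 2 ^ n)

theorem mem_dyadicCell_self (n : ℕ) (x : ℝ) : x ∈ dyadicCell n x :=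
  mem_unitCell_self _

theorem dyadicCell_subset {n : ℕ} {x y : ℝ} (hy : y ∈ dyadicCell n x) :
    dyadicCell n y ⊆ dyadicCell n x :=
  preimage_mono (unitCell_subset hy)

theorem dyadicCell_mem_nhds (n : ℕ) (x : ℝ) : dyadicCell n x ∈ 𝓝 x :=
  (isOpen_Ioo.preimage (continuous_mul_const _)).mem_nhds (mem_dyadicCell_self n x)

theorem dyadicCell_subset_ball (n : ℕ) (x : ℝ) : dyadicCell n x ⊆ Metric.ball x (2⁻¹ ^ n) := by
  intro y hy
  have h2 : (0 : ℝ) < 2 ^ n := by positivity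
  obtain ⟨h₁, h₂⟩ := unitCell_subset_Ioo _ hy
  have key : |y * 2 ^ n - x * 2 ^ n| < 1 := abs_sub_lt_iff.2 ⟨by linarith, by linarith⟩
  rw [← sub_mul, abs_mul, abs_of_pos h2] at key
  rwa [Metric.mem_ball, Real.dist_eq, inv_pow, ← one_div, lt_div_iff₀ h2]

theorem mem_nhdsLE_of_isOpen_sorgenfreyLeft {U : Set ℝ} (hU : IsOpen[sorgenfreyLeftTop] U)
    {x : ℝ} (hx : x ∈ U) : U ∈ 𝓝[≤] x := by
  have : TopologicalSpace.mkOfNhds (fun y : ℝ => 𝓝[≤] y) ≤ sorgenfreyLeftTop :=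
    le_generateFrom fun _ ⟨_, _, hs⟩ y hy => hs ▸ Ioc_mem_nhdsLE_of_mem (hs ▸ hy)
  exact this U hU x hx

theorem mem_nhdsGE_of_isOpen_sorgenfrey {U : Set ℝ} (hU : IsOpen[sorgenfreyTop] U)
    {x : ℝ} (hx : x ∈ U) : U ∈ 𝓝[≥] x := by
  have : TopologicalSpace.mkOfNhds (fun y : ℝ => 𝓝[≥] y) ≤ sorgenfreyTop :=
    le_generateFrom fun _ ⟨_, _, hs⟩ y hy => hs ▸ Ico_mem_nhdsGE_of_mem (hs ▸ hy)
  exact this U hU x hx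

theorem exists_Ioc_subset_compl_of_isClosed_sorgenfreyLeft {C : Set ℝ}
    (hC : IsClosed[sorgenfreyLeftTop] C) (t : ℝ) :
    ∃ δ > 0, t ∉ C → Ioc (t - δ) t ⊆ Cᶜ := by
  by_cases ht : t ∈ C
  · exact ⟨1, one_pos, absurd ht⟩
  obtain ⟨a, hat, hsub⟩ :=
    mem_nhdsLE_iff_exists_Ioc_subset.1 (mem_nhdsLE_of_isOpen_sorgenfreyLeft hC.isOpen_compl ht)
  exact ⟨t - a, sub_pos.2 hat, fun _ => by rwa [sub_sub_cancel]⟩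

theorem exists_Ico_subset_compl_of_isClosed_sorgenfrey {C : Set ℝ}
    (hC : IsClosed[sorgenfreyTop] C) (t : ℝ) :
    ∃ δ > 0, t ∉ C → Ico t (t + δ) ⊆ Cᶜ := by
  by_cases ht : t ∈ C
  · exact ⟨1, one_pos, absurd ht⟩
  obtain ⟨b, htb, hsub⟩ :=
    mem_nhdsGE_iff_exists_Ico_subset.1 (mem_nhdsGE_of_isOpen_sorgenfrey hC.isOpen_compl ht)
  exact ⟨b - t, sub_pos.2 htb, fun _ => by rwa [add_sub_cancel]⟩

section Neighbourhoods

variable {A₁ A₂ A₃ A₄ : Set ℝ} {x : ℝ} {V : Set ℝ}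

local notation "𝓝ₕ" => @nhds ℝ (hybridTop A₁ A₂ A₃ A₄)

theorem mem_nhds_hybridTop_of_mem_A₁ (hx : x ∈ A₁) (hV : V ∈ 𝓝 x) : V ∈ 𝓝ₕ x := by
  obtain ⟨ε, hε, hsub⟩ := Metric.mem_nhds_iff.1 hV
  rw [Real.ball_eq_Ioo] at hsub
  exact (@mem_nhds_iff ℝ (hybridTop A₁ A₂ A₃ A₄) _ _).2 ⟨_, hsub,
    isOpen_generateFrom_of_mem (Or.inl (Or.inl (Or.inl ⟨x, hx, ε, hε, rfl⟩))),
    by simp [hε]⟩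

theorem mem_nhds_hybridTop_of_mem_A₂ (hx : x ∈ A₂) (hV : x ∈ V) : V ∈ 𝓝ₕ x :=
  (@mem_nhds_iff ℝ (hybridTop A₁ A₂ A₃ A₄) _ _).2 ⟨_, singleton_subset_iff.2 hV,
    isOpen_generateFrom_of_mem (Or.inl (Or.inl (Or.inr ⟨x, hx, rfl⟩))), rfl⟩

theorem mem_nhds_hybridTop_of_mem_A₃ (hx : x ∈ A₃) (hV : V ∈ 𝓝[≥] x) : V ∈ 𝓝ₕ x := by
  obtain ⟨b, hxb, hsub⟩ := mem_nhdsGE_iff_exists_Ico_subset.1 hV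
  refine (@mem_nhds_iff ℝ (hybridTop A₁ A₂ A₃ A₄) _ _).2 ⟨_, ?_,
    isOpen_generateFrom_of_mem (Or.inl (Or.inr ⟨x, hx, b - x, sub_pos.2 hxb, rfl⟩)),
    ⟨le_rfl, by simpa using hxb⟩⟩
  rwa [add_sub_cancel]

theorem mem_nhds_hybridTop_of_mem_A₄ (hx : x ∈ A₄) (hV : V ∈ 𝓝[≤] x) : V ∈ 𝓝ₕ x := by
  obtain ⟨a, hax, hsub⟩ := mem_nhdsLE_iff_exists_Ioc_subset.1 hV
  refine (@mem_nhds_iff ℝ (hybridTop A₁ A₂ A₃ A₄) _ _).2 ⟨_, ?_,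
    isOpen_generateFrom_of_mem (Or.inr ⟨x, hx, x - a, sub_pos.2 hax, rfl⟩),
    ⟨by simpa using hax, le_rfl⟩⟩
  rwa [sub_sub_cancel]

end Neighbourhoods

open Classical in
noncomputable def hybridNet (A₂ A₃ A₄ : Set ℝ) (l r : ℕ → ℝ → ℝ) (n : ℕ) (x : ℝ) : Set ℝ :=
  dyadicCell n x ∩ (if x ∈ A₂ ∪ A₃ then Ici x else Ioi (x - l n x)) ∩
    (if x ∈ A₂ ∪ A₄ then Iic x else Iio (x + r n x))

section HybridNet

variable {A₁ A₂ A₃ A₄ : Set ℝ} {l r : ℕ → ℝ → ℝ} {n : ℕ} {x z : ℝ}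

theorem hybridNet_subset_dyadicCell : hybridNet A₂ A₃ A₄ l r n x ⊆ dyadicCell n x :=
  inter_subset_left.trans inter_subset_left

theorem reach_hybridNet_subset_dyadicCell :
    reach (hybridNet A₂ A₃ A₄ l r n) x ⊆ dyadicCell n x :=
  reach_subset (mem_dyadicCell_self n x) fun _ hy =>
    hybridNet_subset_dyadicCell.trans (dyadicCell_subset hy)

theorem hybridNet_subset_singleton (hx : x ∈ A₂) : hybridNet A₂ A₃ A₄ l r n x ⊆ {x} := by
  intro y hy
  rw [hybridNet, if_pos (mem_union_left _ hx), if_pos (mem_union_left _ hx)] at hy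
  exact le_antisymm hy.2 hy.1.2

theorem hybridNet_subset_Ici {F : Set ℝ} (hFA : F ⊆ A₃)
    (hlF : ∀ t, t ∉ F → Ioc (t - l n t) t ⊆ Fᶜ) (hz : z ∈ F) (hzx : z ≤ x) :
    hybridNet A₂ A₃ A₄ l r n x ⊆ Ici z := by
  refine (inter_subset_left.trans inter_subset_right).trans ?_
  split_ifs with hx
  · exact Ici_subset_Ici.2 hzx
  · have hxF : x ∉ F := fun h => hx (Or.inr (hFA h))
    have : z ≤ x - l n x := not_lt.1 fun h => hlF x hxF ⟨h, hzx⟩ hz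
    exact Ioi_subset_Ici_self.trans (Ici_subset_Ici.2 this)

theorem hybridNet_subset_Iic {H : Set ℝ} (hHA : H ⊆ A₄)
    (hrH : ∀ t, t ∉ H → Ico t (t + r n t) ⊆ Hᶜ) (hz : z ∈ H) (hxz : x ≤ z) :
    hybridNet A₂ A₃ A₄ l r n x ⊆ Iic z := by
  refine inter_subset_right.trans ?_
  split_ifs with hx
  · exact Iic_subset_Iic.2 hxz
  · have hxH : x ∉ H := fun h => hx (Or.inr (hHA h))
    have : x + r n x ≤ z := not_lt.1 fun h => hrH x hxH ⟨hxz, h⟩ hz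
    exact Iio_subset_Iic_self.trans (Iic_subset_Iic.2 this)

theorem hybridNet_mem_nhdsGE (h2 : x ∉ A₂) (h4 : x ∉ A₄) (hl : 0 < l n x) (hr : 0 < r n x) :
    hybridNet A₂ A₃ A₄ l r n x ∈ 𝓝[≥] x := by
  rw [hybridNet, if_neg (show x ∉ A₂ ∪ A₄ from fun h => h.elim h2 h4)]
  refine inter_mem (inter_mem (mem_nhdsWithin_of_mem_nhds (dyadicCell_mem_nhds n x)) ?_)
    (mem_nhdsWithin_of_mem_nhds (Iio_mem_nhds (by linarith)))
  split_ifs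
  · exact self_mem_nhdsWithin
  · exact mem_nhdsWithin_of_mem_nhds (Ioi_mem_nhds (by linarith))

theorem hybridNet_mem_nhdsLE (h2 : x ∉ A₂) (h3 : x ∉ A₃) (hl : 0 < l n x) (hr : 0 < r n x) :
    hybridNet A₂ A₃ A₄ l r n x ∈ 𝓝[≤] x := by
  rw [hybridNet, if_neg (show x ∉ A₂ ∪ A₃ from fun h => h.elim h2 h3)]
  refine inter_mem (inter_mem (mem_nhdsWithin_of_mem_nhds (dyadicCell_mem_nhds n x))
    (mem_nhdsWithin_of_mem_nhds (Ioi_mem_nhds (by linarith)))) ?_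
  split_ifs
  · exact self_mem_nhdsWithin
  · exact mem_nhdsWithin_of_mem_nhds (Iio_mem_nhds (by linarith))

theorem reach_hybridNet_subset_Ici {F : Set ℝ} (hFA : F ⊆ A₃)
    (hlF : ∀ t, t ∉ F → Ioc (t - l n t) t ⊆ Fᶜ) (hx : x ∈ F) :
    reach (hybridNet A₂ A₃ A₄ l r n) x ⊆ Ici x :=
  reach_subset self_mem_Ici fun _ hy => hybridNet_subset_Ici hFA hlF hx hy

theorem reach_hybridNet_subset_Iic {H : Set ℝ} (hHA : H ⊆ A₄)
    (hrH : ∀ t, t ∉ H → Ico t (t + r n t) ⊆ Hᶜ) (hx : x ∈ H) :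
    reach (hybridNet A₂ A₃ A₄ l r n) x ⊆ Iic x :=
  reach_subset self_mem_Iic fun _ hy => hybridNet_subset_Iic hHA hrH hx hy

theorem exists_notMem_reach_hybridNet {y : ℝ} (hxy : x ≠ y) :
    ∃ n, y ∉ reach (hybridNet A₂ A₃ A₄ l r n) x := by
  obtain ⟨n, hn⟩ := exists_pow_lt_of_lt_one (dist_pos.2 hxy.symm) (by norm_num : (2⁻¹ : ℝ) < 1)
  exact ⟨n, fun hy => (Metric.mem_ball.1 (dyadicCell_subset_ball n x
    (reach_hybridNet_subset_dyadicCell hy))).not_ge hn.le⟩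

theorem reachNhds_hybridNet_le_nhds : reachNhds (hybridNet A₂ A₃ A₄ l r) x ≤ 𝓝 x := by
  intro U hU
  obtain ⟨ε, hε, hsub⟩ := Metric.mem_nhds_iff.1 hU
  obtain ⟨n, hn⟩ := exists_pow_lt_of_lt_one hε (by norm_num : (2⁻¹ : ℝ) < 1)
  refine mem_of_superset (reach_mem_reachNhds n) ?_
  exact reach_hybridNet_subset_dyadicCell.trans <| (dyadicCell_subset_ball n x).trans <|
    (Metric.ball_subset_ball hn.le).trans hsub

theorem reachNhds_hybridNet_le_nhdsGE {F : Set ℝ} (hFA : F ⊆ A₃)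
    (hlF : ∀ t, t ∉ F → Ioc (t - l n t) t ⊆ Fᶜ) (hx : x ∈ F) :
    reachNhds (hybridNet A₂ A₃ A₄ l r) x ≤ 𝓝[≥] x :=
  le_inf reachNhds_hybridNet_le_nhds <| le_principal_iff.2 <|
    mem_of_superset (reach_mem_reachNhds n) (reach_hybridNet_subset_Ici hFA hlF hx)

theorem reachNhds_hybridNet_le_nhdsLE {H : Set ℝ} (hHA : H ⊆ A₄)
    (hrH : ∀ t, t ∉ H → Ico t (t + r n t) ⊆ Hᶜ) (hx : x ∈ H) :
    reachNhds (hybridNet A₂ A₃ A₄ l r) x ≤ 𝓝[≤] x :=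
  le_inf reachNhds_hybridNet_le_nhds <| le_principal_iff.2 <|
    mem_of_superset (reach_mem_reachNhds n) (reach_hybridNet_subset_Iic hHA hrH hx)

theorem singleton_mem_reachNhds_hybridNet (hx : x ∈ A₂) :
    {x} ∈ reachNhds (hybridNet A₂ A₃ A₄ l r) x :=
  mem_of_superset (reach_mem_reachNhds 0) <| reach_subset rfl fun y hy => by
    obtain rfl : y = x := hy
    exact hybridNet_subset_singleton hx

theorem hybridNet_mem_nhds_hybridTop (hcov : Is4Cover A₁ A₂ A₃ A₄) (hl : 0 < l n x)
    (hr : 0 < r n x) : hybridNet A₂ A₃ A₄ l r n x ∈ @nhds ℝ (hybridTop A₁ A₂ A₃ A₄) x := by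
  obtain ⟨hU, h12, h13, h14, h23, h24, h34⟩ := hcov
  have hx : x ∈ A₁ ∪ A₂ ∪ A₃ ∪ A₄ := hU ▸ mem_univ x
  rcases hx with ((h1 | h2) | h3) | h4
  · refine mem_nhds_hybridTop_of_mem_A₁ h1 ?_
    rw [← nhdsLE_sup_nhdsGE]
    have h2 : x ∉ A₂ := disjoint_left.1 h12 h1
    exact ⟨hybridNet_mem_nhdsLE h2 (disjoint_left.1 h13 h1) hl hr,
      hybridNet_mem_nhdsGE h2 (disjoint_left.1 h14 h1) hl hr⟩
  · refine mem_nhds_hybridTop_of_mem_A₂ h2 ?_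
    rw [hybridNet, if_pos (mem_union_left _ h2), if_pos (mem_union_left _ h2)]
    exact ⟨⟨mem_dyadicCell_self n x, self_mem_Ici⟩, self_mem_Iic⟩
  · exact mem_nhds_hybridTop_of_mem_A₃ h3
      (hybridNet_mem_nhdsGE (disjoint_right.1 h23 h3) (disjoint_left.1 h34 h3) hl hr)
  · exact mem_nhds_hybridTop_of_mem_A₄ h4
      (hybridNet_mem_nhdsLE (disjoint_right.1 h24 h4) (disjoint_right.1 h34 h4) hl hr)

theorem hybridTop_eq_quasiMetricTop_reachDist (hcov : Is4Cover A₁ A₂ A₃ A₄) {F H : ℕ → Set ℝ}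
    (hF : A₃ = ⋃ n, F n) (hH : A₄ = ⋃ n, H n) (hl : ∀ n t, 0 < l n t) (hr : ∀ n t, 0 < r n t)
    (hlF : ∀ n t, t ∉ F n → Ioc (t - l n t) t ⊆ (F n)ᶜ)
    (hrH : ∀ n t, t ∉ H n → Ico t (t + r n t) ⊆ (H n)ᶜ) :
    hybridTop A₁ A₂ A₃ A₄ = quasiMetricTop (reachDist (hybridNet A₂ A₃ A₄ l r)) := by
  refine generateFrom_eq_quasiMetricTop_reachDist
    (fun n x => hybridNet_mem_nhds_hybridTop hcov (hl n x) (hr n x)) ?_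
  rintro s (((⟨w, -, ε, -, rfl⟩ | ⟨w, hw, rfl⟩) | ⟨w, hw, ε, -, rfl⟩) | ⟨w, hw, ε, -, rfl⟩) x hx
  · exact reachNhds_hybridNet_le_nhds (isOpen_Ioo.mem_nhds hx)
  · obtain rfl : x = w := hx
    exact singleton_mem_reachNhds_hybridNet hw
  · rcases hx.1.eq_or_lt with rfl | hwx
    · obtain ⟨n, hn⟩ := mem_iUnion.1 (hF ▸ hw)
      exact reachNhds_hybridNet_le_nhdsGE (hF ▸ subset_iUnion F n) (hlF n) hn
        (Ico_mem_nhdsGE hx.2)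
    · exact reachNhds_hybridNet_le_nhds (Ico_mem_nhds hwx hx.2)
  · rcases hx.2.eq_or_lt with rfl | hxw
    · obtain ⟨n, hn⟩ := mem_iUnion.1 (hH ▸ hw)
      exact reachNhds_hybridNet_le_nhdsLE (hH ▸ subset_iUnion H n) (hrH n) hn
        (Ioc_mem_nhdsLE hx.1)
    · exact reachNhds_hybridNet_le_nhds (Ioc_mem_nhds hx.1 hxw)

end HybridNet

end Hybrid

open Neighbornet Hybrid

/-- If `A₃` is of type `F_σ` in `𝕊←` and `A₄` is of type `F_σ` in `𝕊`, then the
hybrid space `H₄(𝒜)` is non-archimedeanly quasi-metrizable. -/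
theorem hybrid_naQuasiMetrizable_of_Fsigma
    (A₁ A₂ A₃ A₄ : Set ℝ) (hcov : Is4Cover A₁ A₂ A₃ A₄)
    (hF : ∃ F : ℕ → Set ℝ, (∀ n, @IsClosed ℝ sorgenfreyLeftTop (F n)) ∧ A₃ = ⋃ n, F n)
    (hH : ∃ H : ℕ → Set ℝ, (∀ n, @IsClosed ℝ sorgenfreyTop (H n)) ∧ A₄ = ⋃ n, H n) :
    NAQuasiMetrizableTop (hybridTop A₁ A₂ A₃ A₄) := by
  obtain ⟨F, hFc, hF⟩ := hF
  obtain ⟨H, hHc, hH⟩ := hH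
  choose l hl hlF using fun n => exists_Ioc_subset_compl_of_isClosed_sorgenfreyLeft (hFc n)
  choose r hr hrH using fun n => exists_Ico_subset_compl_of_isClosed_sorgenfrey (hHc n)
  exact ⟨reachDist (hybridNet A₂ A₃ A₄ l r),
    isNAQuasiMetric_reachDist fun _ _ => exists_notMem_reach_hybridNet,
    hybridTop_eq_quasiMetricTop_reachDist hcov hF hH hl hr hlF hrH⟩
end

section
/- Let 𝒜 = {A₁, A₂, A₃, A₄} be a 4-cover of ℝ with A₃ = ∅ and A₄ = ∅ (i.e. every point of ℝ lies in A₁ or A₂). Then the hybrid space H₄(𝒜) is non-archimedeanly quasi-metrizable. -/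
open Set

namespace HybridAux

/-- The level-`n` transitive neighborhood of `x`. -/
noncomputable def V (A₂ : Set ℝ) (n : ℕ) (x : ℝ) : Set ℝ :=
  letI := Classical.dec (x ∈ A₂)
  if x ∈ A₂ then {x}
  else Set.Ioo (((⌈x * 2 ^ n⌉ : ℝ) - 1) / 2 ^ n) (((⌊x * 2 ^ n⌋ : ℝ) + 1) / 2 ^ n)

lemma V_of_mem {A₂ : Set ℝ} {x : ℝ} (h : x ∈ A₂) (n : ℕ) : V A₂ n x = {x} := by
  unfold V; split_ifs; rfl

lemma V_of_not_mem {A₂ : Set ℝ} {x : ℝ} (h : x ∉ A₂) (n : ℕ) :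
    V A₂ n x = Set.Ioo (((⌈x * 2 ^ n⌉ : ℝ) - 1) / 2 ^ n) (((⌊x * 2 ^ n⌋ : ℝ) + 1) / 2 ^ n) := by
  unfold V; split_ifs; rfl

lemma mem_V_self (A₂ : Set ℝ) (n : ℕ) (x : ℝ) : x ∈ V A₂ n x := by
  by_cases h : x ∈ A₂
  · rw [V_of_mem h]; rfl
  · rw [V_of_not_mem h]
    have h2 : (0:ℝ) < 2 ^ n := by positivity
    constructor
    · rw [div_lt_iff₀ h2]
      have := Int.ceil_lt_add_one (x * 2 ^ n)
      linarith
    · rw [lt_div_iff₀ h2]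
      have := Int.lt_floor_add_one (x * 2 ^ n)
      linarith

lemma V_subset (A₂ : Set ℝ) (n : ℕ) (x : ℝ) :
    V A₂ n x ⊆ Set.Ioo (x - (2⁻¹:ℝ) ^ n) (x + (2⁻¹:ℝ) ^ n) := by
  have h2 : (0:ℝ) < 2 ^ n := by positivity
  have hone : (2⁻¹:ℝ) ^ n * 2 ^ n = 1 := by rw [← mul_pow]; norm_num
  have hpos : (0:ℝ) < (2⁻¹:ℝ) ^ n := by positivity
  by_cases h : x ∈ A₂
  · rw [V_of_mem h]
    intro z hz
    rw [mem_singleton_iff] at hz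
    subst hz
    exact ⟨by linarith, by linarith⟩
  · rw [V_of_not_mem h]
    intro z hz
    obtain ⟨hz1, hz2⟩ := hz
    have hc : (x * 2 ^ n : ℝ) ≤ ⌈x * 2 ^ n⌉ := Int.le_ceil _
    have hf : (⌊x * 2 ^ n⌋ : ℝ) ≤ x * 2 ^ n := Int.floor_le _
    have hl : x - (2⁻¹:ℝ) ^ n ≤ ((⌈x * 2 ^ n⌉ : ℝ) - 1) / 2 ^ n := by
      rw [le_div_iff₀ h2]; nlinarith
    have hu : ((⌊x * 2 ^ n⌋ : ℝ) + 1) / 2 ^ n ≤ x + (2⁻¹:ℝ) ^ n := by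
      rw [div_le_iff₀ h2]; nlinarith
    exact ⟨by linarith, by linarith⟩

lemma V_trans {A₂ : Set ℝ} {n : ℕ} {x y : ℝ} (hy : y ∈ V A₂ n x) :
    V A₂ n y ⊆ V A₂ n x := by
  by_cases hx : x ∈ A₂
  · rw [V_of_mem hx] at hy
    rw [mem_singleton_iff] at hy
    subst hy
    exact Set.Subset.rfl
  by_cases hy2 : y ∈ A₂
  · rw [V_of_mem hy2]
    intro z hz
    rw [mem_singleton_iff] at hz
    subst hz
    exact hy
  · rw [V_of_not_mem hx] at hy
    rw [V_of_not_mem hy2, V_of_not_mem hx]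
    have h2 : (0:ℝ) < 2 ^ n := by positivity
    obtain ⟨hy1, hyu⟩ := hy
    have hv1 : ((⌈x * 2 ^ n⌉ : ℝ) - 1) < y * 2 ^ n := by
      rw [div_lt_iff₀ h2] at hy1; linarith
    have hv2 : y * 2 ^ n < ((⌊x * 2 ^ n⌋ : ℝ) + 1) := by
      rw [lt_div_iff₀ h2] at hyu; linarith
    have hceil : ⌈x * 2 ^ n⌉ ≤ ⌈y * 2 ^ n⌉ := by
      have : ((⌈x * 2 ^ n⌉ : ℝ) - 1) < ⌈y * 2 ^ n⌉ := lt_of_lt_of_le hv1 (Int.le_ceil _)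
      have : (⌈x * 2 ^ n⌉ : ℤ) - 1 < ⌈y * 2 ^ n⌉ := by exact_mod_cast this
      omega
    have hfloor : ⌊y * 2 ^ n⌋ ≤ ⌊x * 2 ^ n⌋ := by
      have : (⌊y * 2 ^ n⌋ : ℝ) < (⌊x * 2 ^ n⌋ : ℝ) + 1 := lt_of_le_of_lt (Int.floor_le _) hv2
      have : (⌊y * 2 ^ n⌋ : ℤ) < ⌊x * 2 ^ n⌋ + 1 := by exact_mod_cast this
      omega
    have hc' : ((⌈x * 2 ^ n⌉ : ℝ)) ≤ ((⌈y * 2 ^ n⌉ : ℝ)) := by exact_mod_cast hceil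
    have hf' : ((⌊y * 2 ^ n⌋ : ℝ)) ≤ ((⌊x * 2 ^ n⌋ : ℝ)) := by exact_mod_cast hfloor
    apply Set.Ioo_subset_Ioo
    · rw [div_le_div_iff₀ h2 h2]; nlinarith
    · rw [div_le_div_iff₀ h2 h2]; nlinarith

lemma V_anti_succ (A₂ : Set ℝ) (n : ℕ) (x : ℝ) : V A₂ (n + 1) x ⊆ V A₂ n x := by
  by_cases h : x ∈ A₂
  · rw [V_of_mem h, V_of_mem h]
  · rw [V_of_not_mem h, V_of_not_mem h]
    have h2 : (0:ℝ) < 2 ^ n := by positivity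
    have h2' : (0:ℝ) < 2 ^ (n + 1) := by positivity
    have hpow : (2:ℝ) ^ (n + 1) = 2 * 2 ^ n := by ring
    have hcx : (x * 2 ^ n : ℝ) ≤ ⌈x * 2 ^ n⌉ := Int.le_ceil _
    have hcx' : (⌈x * 2 ^ n⌉ : ℝ) < x * 2 ^ n + 1 := Int.ceil_lt_add_one _
    have hfx : (⌊x * 2 ^ n⌋ : ℝ) ≤ x * 2 ^ n := Int.floor_le _
    have hfx' : x * 2 ^ n < (⌊x * 2 ^ n⌋ : ℝ) + 1 := Int.lt_floor_add_one _
    have hcn : (x * 2 ^ (n+1) : ℝ) ≤ ⌈x * 2 ^ (n+1)⌉ := Int.le_ceil _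
    have hfn : (⌊x * 2 ^ (n+1)⌋ : ℝ) ≤ x * 2 ^ (n+1) := Int.floor_le _
    -- integer inequalities
    have hceil : 2 * ⌈x * 2 ^ n⌉ - 1 ≤ ⌈x * 2 ^ (n+1)⌉ := by
      have hx2 : x * 2 ^ (n+1) = 2 * (x * 2 ^ n) := by ring
      have : (2:ℝ) * ⌈x * 2 ^ n⌉ - 2 < ⌈x * 2 ^ (n+1)⌉ := by linarith
      have : (2 * ⌈x * 2 ^ n⌉ - 2 : ℤ) < ⌈x * 2 ^ (n+1)⌉ := by exact_mod_cast this
      omega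
    have hfloor : ⌊x * 2 ^ (n+1)⌋ ≤ 2 * ⌊x * 2 ^ n⌋ + 1 := by
      have hx2 : x * 2 ^ (n+1) = 2 * (x * 2 ^ n) := by ring
      have : (⌊x * 2 ^ (n+1)⌋ : ℝ) < 2 * ⌊x * 2 ^ n⌋ + 2 := by linarith
      have : (⌊x * 2 ^ (n+1)⌋ : ℤ) < 2 * ⌊x * 2 ^ n⌋ + 2 := by exact_mod_cast this
      omega
    have hceil' : (2 * (⌈x * 2 ^ n⌉:ℝ) - 1) ≤ (⌈x * 2 ^ (n+1)⌉:ℝ) := by exact_mod_cast hceil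
    have hfloor' : ((⌊x * 2 ^ (n+1)⌋:ℝ)) ≤ 2 * (⌊x * 2 ^ n⌋:ℝ) + 1 := by exact_mod_cast hfloor
    apply Set.Ioo_subset_Ioo
    · rw [div_le_div_iff₀ h2 h2']
      calc ((⌈x * 2 ^ n⌉:ℝ) - 1) * 2 ^ (n+1) = (2 * (⌈x * 2 ^ n⌉:ℝ) - 2) * 2 ^ n := by
            rw [hpow]; ring
        _ ≤ ((⌈x * 2 ^ (n+1)⌉:ℝ) - 1) * 2 ^ n := mul_le_mul_of_nonneg_right (by linarith) h2.le
    · rw [div_le_div_iff₀ h2' h2]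
      calc ((⌊x * 2 ^ (n+1)⌋:ℝ) + 1) * 2 ^ n ≤ (2 * (⌊x * 2 ^ n⌋:ℝ) + 2) * 2 ^ n :=
            mul_le_mul_of_nonneg_right (by linarith) h2.le
        _ = ((⌊x * 2 ^ n⌋:ℝ) + 1) * 2 ^ (n+1) := by rw [hpow]; ring

lemma V_anti (A₂ : Set ℝ) {m n : ℕ} (h : m ≤ n) (x : ℝ) : V A₂ n x ⊆ V A₂ m x := by
  induction h with
  | refl => exact Set.Subset.rfl
  | step _ ih => exact (V_anti_succ A₂ _ x).trans ih

/-- The non-archimedean quasi-metric. -/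
noncomputable def rho (A₂ : Set ℝ) (x y : ℝ) : ℝ :=
  letI := Classical.dec (y = x)
  if y = x then 0 else 2 * (2⁻¹:ℝ) ^ sInf {n : ℕ | y ∉ V A₂ n x}

lemma rho_self (A₂ : Set ℝ) (x : ℝ) : rho A₂ x x = 0 := by
  unfold rho; split_ifs with h
  · rfl
  · exact absurd rfl h

lemma rho_of_ne {A₂ : Set ℝ} {x y : ℝ} (h : y ≠ x) :
    rho A₂ x y = 2 * (2⁻¹:ℝ) ^ sInf {n : ℕ | y ∉ V A₂ n x} := by
  unfold rho; split_ifs with h'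
  · exact absurd h' h
  · rfl

lemma rho_nonneg (A₂ : Set ℝ) (x y : ℝ) : 0 ≤ rho A₂ x y := by
  rcases eq_or_ne y x with rfl | h
  · rw [rho_self]
  · rw [rho_of_ne h]; positivity

lemma F_nonempty {A₂ : Set ℝ} {x y : ℝ} (h : y ≠ x) :
    {n : ℕ | y ∉ V A₂ n x}.Nonempty := by
  have habs : 0 < |y - x| := abs_pos.2 (sub_ne_zero.2 h)
  obtain ⟨n, hn⟩ := exists_pow_lt_of_lt_one habs (by norm_num : (2⁻¹:ℝ) < 1)
  refine ⟨n, fun hy => ?_⟩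
  have := V_subset A₂ n x hy
  rw [Set.mem_Ioo] at this
  have habs2 : |y - x| < 2⁻¹ ^ n := by
    rw [abs_sub_lt_iff]
    constructor <;> linarith [this.1, this.2]
  linarith

lemma rho_pos {A₂ : Set ℝ} {x y : ℝ} (h : y ≠ x) : 0 < rho A₂ x y := by
  rw [rho_of_ne h]; positivity

lemma rho_na (A₂ : Set ℝ) (x y z : ℝ) :
    rho A₂ x y ≤ max (rho A₂ x z) (rho A₂ z y) := by
  rcases eq_or_ne y x with rfl | hyx
  · rw [rho_self]
    exact le_max_of_le_left (rho_nonneg _ _ _)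
  rcases eq_or_ne z x with rfl | hzx
  · exact le_max_of_le_right le_rfl
  rcases eq_or_ne y z with rfl | hyz
  · exact le_max_of_le_left le_rfl
  rw [rho_of_ne hyx, rho_of_ne hzx, rho_of_ne hyz]
  set F1 := sInf {n : ℕ | z ∉ V A₂ n x} with hF1
  set F2 := sInf {n : ℕ | y ∉ V A₂ n z} with hF2
  have key : min F1 F2 ≤ sInf {n : ℕ | y ∉ V A₂ n x} := by
    by_contra hlt
    push_neg at hlt
    have hmem : y ∉ V A₂ (sInf {n : ℕ | y ∉ V A₂ n x}) x := Nat.sInf_mem (F_nonempty hyx)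
    have h1 : z ∈ V A₂ (sInf {n : ℕ | y ∉ V A₂ n x}) x := by
      by_contra hc
      exact Nat.notMem_of_lt_sInf (lt_of_lt_of_le hlt (min_le_left _ _)) hc
    have h2 : y ∈ V A₂ (sInf {n : ℕ | y ∉ V A₂ n x}) z := by
      by_contra hc
      exact Nat.notMem_of_lt_sInf (lt_of_lt_of_le hlt (min_le_right _ _)) hc
    exact hmem (V_trans h1 h2)
  have hle : (2⁻¹:ℝ) ^ sInf {n : ℕ | y ∉ V A₂ n x} ≤ (2⁻¹:ℝ) ^ (min F1 F2) :=
    pow_le_pow_of_le_one (by norm_num) (by norm_num) key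
  rcases min_cases F1 F2 with ⟨hmin, _⟩ | ⟨hmin, _⟩
  · exact le_max_of_le_left (by rw [hmin] at hle; linarith)
  · exact le_max_of_le_right (by rw [hmin] at hle; linarith)

lemma rho_triangle (A₂ : Set ℝ) (x y z : ℝ) :
    rho A₂ x y ≤ rho A₂ x z + rho A₂ z y :=
  (rho_na A₂ x y z).trans (max_le_add_of_nonneg (rho_nonneg _ _ _) (rho_nonneg _ _ _))

lemma ball_sub_V (A₂ : Set ℝ) (n : ℕ) (y : ℝ) :
    {z : ℝ | rho A₂ y z < 2 * (2⁻¹:ℝ) ^ (n + 1)} ⊆ V A₂ n y := by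
  intro z hz
  rcases eq_or_ne z y with rfl | hzy
  · exact mem_V_self _ _ _
  · rw [Set.mem_setOf_eq, rho_of_ne hzy] at hz
    have h : (2⁻¹:ℝ) ^ sInf {k : ℕ | z ∉ V A₂ k y} < (2⁻¹:ℝ) ^ (n + 1) := by linarith
    have hn : n + 1 ≤ sInf {k : ℕ | z ∉ V A₂ k y} := by
      by_contra hc
      push_neg at hc
      have := pow_le_pow_of_le_one (by norm_num : (0:ℝ) ≤ 2⁻¹) (by norm_num) hc.le
      linarith
    by_contra hc2
    exact Nat.notMem_of_lt_sInf (lt_of_lt_of_le (Nat.lt_succ_self n) hn) hc2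

lemma exists_Ioo_sub_ball {A₂ : Set ℝ} {y : ℝ} (hy : y ∉ A₂) {r : ℝ} (hr : 0 < r) :
    ∃ δ > 0, Set.Ioo (y - δ) (y + δ) ⊆ {z : ℝ | rho A₂ y z < r} := by
  obtain ⟨n, hn⟩ := exists_pow_lt_of_lt_one (half_pos hr) (by norm_num : (2⁻¹:ℝ) < 1)
  have hr2 : 2 * (2⁻¹:ℝ) ^ (n + 1) < r := by
    have : (2⁻¹:ℝ) ^ (n + 1) ≤ (2⁻¹:ℝ) ^ n :=
      pow_le_pow_of_le_one (by norm_num) (by norm_num) (Nat.le_succ n)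
    linarith
  set L := ((⌈y * 2 ^ n⌉ : ℝ) - 1) / 2 ^ n with hL
  set U := ((⌊y * 2 ^ n⌋ : ℝ) + 1) / 2 ^ n with hU
  have hV : V A₂ n y = Set.Ioo L U := V_of_not_mem hy n
  have hyV := mem_V_self A₂ n y
  rw [hV, Set.mem_Ioo] at hyV
  refine ⟨min (y - L) (U - y), lt_min (by linarith [hyV.1]) (by linarith [hyV.2]), ?_⟩
  intro z hz
  rw [Set.mem_Ioo] at hz
  have hzV : z ∈ V A₂ n y := by
    rw [hV, Set.mem_Ioo]
    constructor
    · linarith [min_le_left (y - L) (U - y), hz.1]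
    · linarith [min_le_right (y - L) (U - y), hz.2]
  rcases eq_or_ne z y with rfl | hzy
  · rw [Set.mem_setOf_eq, rho_self]; exact hr
  · rw [Set.mem_setOf_eq, rho_of_ne hzy]
    have hF : n + 1 ≤ sInf {k : ℕ | z ∉ V A₂ k y} := by
      have hmem := Nat.sInf_mem (F_nonempty (A₂ := A₂) hzy)
      by_contra hc
      push_neg at hc
      exact hmem (V_anti A₂ (Nat.lt_succ_iff.mp hc) y hzV)
    have : (2⁻¹:ℝ) ^ sInf {k : ℕ | z ∉ V A₂ k y} ≤ (2⁻¹:ℝ) ^ (n + 1) :=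
      pow_le_pow_of_le_one (by norm_num) (by norm_num) hF
    linarith

lemma isOpen_gen {X : Type*} (S : Set (Set X)) (U : Set X)
    (h : ∀ x ∈ U, ∃ G ∈ S, x ∈ G ∧ G ⊆ U) :
    (TopologicalSpace.generateFrom S).IsOpen U := by
  have hU : U = ⋃₀ {G | G ∈ S ∧ G ⊆ U} := by
    ext z
    constructor
    · intro hz
      obtain ⟨G, hG, hzG, hGU⟩ := h z hz
      exact ⟨G, ⟨hG, hGU⟩, hzG⟩
    · rintro ⟨G, ⟨_, hGU⟩, hzG⟩
      exact hGU hzG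
  rw [hU]
  exact TopologicalSpace.GenerateOpen.sUnion _
    (fun G hG => TopologicalSpace.GenerateOpen.basic _ hG.1)

end HybridAux

/-- **Corollary 2.6.** If `A₃ = A₄ = ∅`, then `H₄(𝒜)` is non-archimedeanly
quasi-metrizable. -/
theorem hybrid_naQuasiMetrizable_of_A3_A4_empty
    (A₁ A₂ A₃ A₄ : Set ℝ) (hcov : Is4Cover A₁ A₂ A₃ A₄)
    (h3 : A₃ = ∅) (h4 : A₄ = ∅) :
    NAQuasiMetrizableTop (hybridTop A₁ A₂ A₃ A₄) := by
  classical
  obtain ⟨hunion, hd12, -, -, -, -, -⟩ := hcov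
  have hcover : ∀ x : ℝ, x ∈ A₁ ∨ x ∈ A₂ := by
    intro x
    have hx : x ∈ A₁ ∪ A₂ ∪ A₃ ∪ A₄ := hunion ▸ Set.mem_univ x
    rw [h3, h4] at hx
    simpa using hx
  refine ⟨HybridAux.rho A₂, ⟨⟨fun x y => HybridAux.rho_nonneg A₂ x y, ?_,
    fun x y z => HybridAux.rho_triangle A₂ x y z⟩,
    fun x y z => HybridAux.rho_na A₂ x y z⟩, ?_⟩
  · intro x y
    rcases eq_or_ne y x with rfl | hne
    · simp [HybridAux.rho_self]
    · constructor
      · intro h0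
        exact absurd h0 (ne_of_gt (HybridAux.rho_pos hne))
      · intro hxy
        exact absurd hxy.symm hne
  -- topology equality
  · -- first: every `Ioo` is hybrid-open
    have hIooOpen : ∀ a b : ℝ, (hybridTop A₁ A₂ A₃ A₄).IsOpen (Set.Ioo a b) := by
      intro a b
      apply HybridAux.isOpen_gen
      intro y hy
      rcases hcover y with hy1 | hy2
      · set δ := min (y - a) (b - y) with hδdef
        have hδ : 0 < δ := lt_min (by linarith [hy.1]) (by linarith [hy.2])
        refine ⟨Set.Ioo (y - δ) (y + δ),
          Or.inl (Or.inl (Or.inl ⟨y, hy1, δ, hδ, rfl⟩)), ?_, ?_⟩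
        · exact ⟨by linarith, by linarith⟩
        · intro z hz
          rw [Set.mem_Ioo] at hz ⊢
          constructor
          · linarith [min_le_left (y - a) (b - y), hz.1]
          · linarith [min_le_right (y - a) (b - y), hz.2]
      · exact ⟨{y}, Or.inl (Or.inl (Or.inr ⟨y, hy2, rfl⟩)), Set.mem_singleton y,
          Set.singleton_subset_iff.mpr hy⟩
    have hVopen : ∀ (n : ℕ) (x : ℝ), (hybridTop A₁ A₂ A₃ A₄).IsOpen (HybridAux.V A₂ n x) := by
      intro n x
      by_cases hx : x ∈ A₂
      · rw [HybridAux.V_of_mem hx]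
        exact TopologicalSpace.GenerateOpen.basic _ (Or.inl (Or.inl (Or.inr ⟨x, hx, rfl⟩)))
      · rw [HybridAux.V_of_not_mem hx]
        exact hIooOpen _ _
    apply le_antisymm
    · -- hybridTop ≤ quasiMetricTop : every ball is hybrid-open
      apply le_generateFrom
      rintro s ⟨x, r, hr, rfl⟩
      apply HybridAux.isOpen_gen
      intro y hy
      rw [Set.mem_setOf_eq] at hy
      rcases hcover y with hy1 | hy2
      · have hy2' : y ∉ A₂ := Set.disjoint_left.mp hd12 hy1
        obtain ⟨δ, hδ, hsub⟩ := HybridAux.exists_Ioo_sub_ball hy2' hr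
        refine ⟨Set.Ioo (y - δ) (y + δ),
          Or.inl (Or.inl (Or.inl ⟨y, hy1, δ, hδ, rfl⟩)), ⟨by linarith, by linarith⟩, ?_⟩
        intro z hz
        have hyz : HybridAux.rho A₂ y z < r := hsub hz
        rw [Set.mem_setOf_eq]
        exact lt_of_le_of_lt (HybridAux.rho_na A₂ x z y) (max_lt hy hyz)
      · exact ⟨{y}, Or.inl (Or.inl (Or.inr ⟨y, hy2, rfl⟩)), Set.mem_singleton y,
          Set.singleton_subset_iff.mpr hy⟩
    · -- quasiMetricTop ≤ hybridTop : every hybrid generator is quasi-open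
      apply le_generateFrom
      rintro s (((⟨x, hx1, ε, hε, rfl⟩ | ⟨x, hx2, rfl⟩) | ⟨x, hx3, -⟩) | ⟨x, hx4, -⟩)
      · -- s = Ioo (x - ε) (x + ε)
        apply HybridAux.isOpen_gen
        intro y hy
        rw [Set.mem_Ioo] at hy
        set c := min (y - (x - ε)) ((x + ε) - y) with hcdef
        have hc : 0 < c := lt_min (by linarith [hy.1]) (by linarith [hy.2])
        obtain ⟨n, hn⟩ := exists_pow_lt_of_lt_one hc (by norm_num : (2⁻¹:ℝ) < 1)
        refine ⟨{z : ℝ | HybridAux.rho A₂ y z < 2 * (2⁻¹:ℝ) ^ (n + 1)},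
          ⟨y, 2 * (2⁻¹:ℝ) ^ (n + 1), by positivity, rfl⟩, ?_, ?_⟩
        · rw [Set.mem_setOf_eq, HybridAux.rho_self]
          positivity
        · intro z hz
          have hzV := HybridAux.ball_sub_V A₂ n y hz
          have hzI := HybridAux.V_subset A₂ n y hzV
          rw [Set.mem_Ioo] at hzI ⊢
          constructor
          · linarith [min_le_left (y - (x - ε)) ((x + ε) - y), hzI.1]
          · linarith [min_le_right (y - (x - ε)) ((x + ε) - y), hzI.2]
      · -- s = {x} with x ∈ A₂
        apply HybridAux.isOpen_gen
        intro y hy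
        rw [Set.mem_singleton_iff] at hy
        subst hy
        refine ⟨{z : ℝ | HybridAux.rho A₂ y z < 2 * (2⁻¹:ℝ) ^ (0 + 1)},
          ⟨y, 2 * (2⁻¹:ℝ) ^ (0 + 1), by norm_num, rfl⟩, ?_, ?_⟩
        · rw [Set.mem_setOf_eq, HybridAux.rho_self]
          norm_num
        · intro z hz
          have hzV := HybridAux.ball_sub_V A₂ 0 y hz
          rwa [HybridAux.V_of_mem hx2] at hzV
      · rw [h3] at hx3
        exact absurd hx3 (Set.notMem_empty x)
      · rw [h4] at hx4
        exact absurd hx4 (Set.notMem_empty x)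
end

section
/- Let 𝒜 = {A₁, A₂, A₃, A₄} be a 4-cover of ℝ such that either A₁ = ∅ and A₃ = ∅, or A₁ = ∅ and A₄ = ∅. Then the hybrid space H₄(𝒜) is non-archimedeanly quasi-metrizable. -/
open Set

open TopologicalSpace

noncomputable def hrho {X : Type*} (U : ℕ → X → Set X) (x y : X) : ℝ :=
  sInf ((fun n => ((2:ℝ)⁻¹)^n) '' {n | y ∈ U n x})

section Abstract
variable {X : Type*} {U : ℕ → X → Set X}

theorem habstract
    (hU0 : ∀ x, U 0 x = univ)
    (hmem : ∀ n x, x ∈ U n x)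
    (hanti : ∀ n x, U (n+1) x ⊆ U n x)
    (htrans : ∀ n x y, y ∈ U n x → U n y ⊆ U n x)
    (hsep : ∀ x y, (∀ n, y ∈ U n x) → y = x)
    (G : Set (Set X))
    (hUG : ∀ n x, GenerateOpen G (U n x))
    (hGU : ∀ s ∈ G, ∀ y ∈ s, ∃ n, U n y ⊆ s) :
    NAQuasiMetrizableTop (TopologicalSpace.generateFrom G) := by
  set ρ := hrho U with hρ
  have hanti' : ∀ x {n m : ℕ}, n ≤ m → U m x ⊆ U n x := by
    intro x n m h
    induction h with
    | refl => exact subset_rfl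
    | step h ih => exact fun y hy => ih (hanti _ _ hy)
  have hne : ∀ x y, ((fun n => ((2:ℝ)⁻¹)^n) '' {n | y ∈ U n x}).Nonempty := by
    intro x y; exact ⟨1, 0, by simp [hU0], by norm_num⟩
  have hbdd : ∀ x y, BddBelow ((fun n => ((2:ℝ)⁻¹)^n) '' {n | y ∈ U n x}) := by
    intro x y; exact ⟨0, by rintro r ⟨n, -, rfl⟩; positivity⟩
  have hlt : ∀ x y r, ρ x y < r ↔ ∃ n, y ∈ U n x ∧ ((2:ℝ)⁻¹)^n < r := by
    intro x y r
    rw [hρ, hrho, csInf_lt_iff (hbdd x y) (hne x y)]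
    constructor
    · rintro ⟨b, ⟨n, hn, rfl⟩, hb⟩; exact ⟨n, hn, hb⟩
    · rintro ⟨n, hn, h⟩; exact ⟨_, ⟨n, hn, rfl⟩, h⟩
  have hle : ∀ x y n, y ∈ U n x → ρ x y ≤ ((2:ℝ)⁻¹)^n := by
    intro x y n hn; exact csInf_le (hbdd x y) ⟨n, hn, rfl⟩
  have hnonneg : ∀ x y, 0 ≤ ρ x y := by
    intro x y
    exact le_csInf (hne x y) (by rintro r ⟨n, -, rfl⟩; positivity)
  have hself : ∀ x, ρ x x = 0 := by
    intro x
    refine le_antisymm ?_ (hnonneg x x)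
    by_contra h
    push_neg at h
    obtain ⟨n, hn⟩ := exists_pow_lt_of_lt_one h (by norm_num : (2:ℝ)⁻¹ < 1)
    exact absurd ((hle x x n (hmem n x)).trans_lt hn) (lt_irrefl _)
  have hzero : ∀ x y, ρ x y = 0 → y = x := by
    intro x y h
    refine hsep x y fun n => ?_
    have : ρ x y < ((2:ℝ)⁻¹)^n := h ▸ (by positivity)
    obtain ⟨m, hm, hlt'⟩ := (hlt x y _).1 this
    have : n ≤ m := by
      by_contra hc
      push_neg at hc
      exact absurd (pow_lt_pow_right_of_lt_one₀ (by norm_num) (by norm_num) hc) (not_lt.2 hlt'.le)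
    exact hanti' x this hm
  have hNA : ∀ x y z, ρ x y ≤ max (ρ x z) (ρ z y) := by
    intro x y z
    by_contra h
    push_neg at h
    have h1 : ρ x z < ρ x y := (le_max_left _ _).trans_lt h
    have h2 : ρ z y < ρ x y := (le_max_right _ _).trans_lt h
    obtain ⟨n, hn, hn'⟩ := (hlt x z _).1 h1
    obtain ⟨m, hm, hm'⟩ := (hlt z y _).1 h2
    rcases le_total n m with hnm | hnm
    · have : y ∈ U n x := htrans n x z hn (hanti' z hnm hm)
      exact absurd ((hle x y n this).trans_lt hn') (lt_irrefl _)
    · have : y ∈ U m x := htrans m x z (hanti' x hnm hn) hm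
      exact absurd ((hle x y m this).trans_lt hm') (lt_irrefl _)
  refine ⟨ρ, ⟨⟨hnonneg, fun x y => ⟨fun h => (hzero x y h).symm, fun h => h ▸ hself x⟩,
      fun x y z => (hNA x y z).trans (max_le_add_of_nonneg (hnonneg x z) (hnonneg z y))⟩, hNA⟩, ?_⟩
  -- topology equality
  have ball_eq : ∀ x (n : ℕ), {y | ρ x y < ((2:ℝ)⁻¹)^n} = U (n+1) x := by
    intro x n
    ext y
    simp only [mem_setOf_eq, hlt]
    constructor
    · rintro ⟨m, hm, hm'⟩
      have : n + 1 ≤ m := by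
        by_contra hc
        push_neg at hc
        have := pow_le_pow_of_le_one (by norm_num) (by norm_num : (2:ℝ)⁻¹ ≤ 1) (Nat.lt_succ_iff.1 hc)
        exact absurd (hm'.trans_le this) (lt_irrefl _)
      exact hanti' x this hm
    · intro hy
      exact ⟨n+1, hy, pow_lt_pow_right_of_lt_one₀ (by norm_num) (by norm_num) (Nat.lt_succ_self n)⟩
  refine le_antisymm ?_ ?_
  · -- generateFrom G ≤ quasiMetricTop ρ : every ρ-ball is G-open
    apply le_generateFrom
    rintro B ⟨x, r, hr, rfl⟩
    have : {y | ρ x y < r} = ⋃ n ∈ {n : ℕ | ((2:ℝ)⁻¹)^n < r}, U n x := by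
      ext y
      simp only [mem_setOf_eq, hlt, mem_iUnion]
      constructor
      · rintro ⟨n, hn, hn'⟩; exact ⟨n, hn', hn⟩
      · rintro ⟨n, hn', hn⟩; exact ⟨n, hn, hn'⟩
    rw [this]
    letI : TopologicalSpace X := TopologicalSpace.generateFrom G
    exact isOpen_biUnion (fun n _ => hUG n x)
  · -- quasiMetricTop ρ ≤ generateFrom G : every s ∈ G is ρ-open
    apply le_generateFrom
    intro s hs
    have : s = ⋃₀ {B | (∃ x r, 0 < r ∧ B = {y | ρ x y < r}) ∧ B ⊆ s} := by
      apply Subset.antisymm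
      · intro y hy
        obtain ⟨n, hn⟩ := hGU s hs y hy
        refine ⟨{z | ρ y z < ((2:ℝ)⁻¹)^n}, ⟨⟨y, _, by positivity, rfl⟩, ?_⟩, ?_⟩
        · rw [ball_eq]; exact (hanti n y).trans hn
        · show ρ y y < _; rw [hself]; positivity
      · exact sUnion_subset fun B hB => hB.2
    rw [this]
    letI : TopologicalSpace X := quasiMetricTop ρ
    exact isOpen_sUnion fun B hB =>
      TopologicalSpace.GenerateOpen.basic _ (by obtain ⟨x, r, hr, rfl⟩ := hB.1; exact ⟨x, r, hr, rfl⟩)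

end Abstract


noncomputable def dR (n : ℕ) (x : ℝ) : ℝ := ((⌊x * 2^n⌋ : ℝ) + 1)/2^n
noncomputable def dL (n : ℕ) (x : ℝ) : ℝ := ((⌈x * 2^n⌉ : ℝ) - 1)/2^n

lemma dR_gt (n : ℕ) (x : ℝ) : x < dR n x := by
  rw [dR, lt_div_iff₀ (by positivity)]
  exact Int.lt_floor_add_one _

lemma dR_le (n : ℕ) (x : ℝ) : dR n x ≤ x + ((2:ℝ)⁻¹)^n := by
  rw [dR, div_le_iff₀ (by positivity)]
  have := Int.floor_le (x * 2^n)
  have h2 : ((2:ℝ)⁻¹)^n * 2^n = 1 := by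
    rw [← mul_pow]; norm_num
  nlinarith [this, h2]

lemma dR_mono (n : ℕ) {x y : ℝ} (hxy : x ≤ y) (hy : y < dR n x) : dR n y ≤ dR n x := by
  rw [dR, lt_div_iff₀ (by positivity)] at hy
  have : ⌊y * 2^n⌋ ≤ ⌊x * 2^n⌋ := by
    have := Int.floor_lt.2 (by push_cast; linarith : y * 2^n < ((⌊x * 2^n⌋ + 1 : ℤ) : ℝ))
    omega
  rw [dR, dR]
  gcongr


lemma dR_anti (n : ℕ) (x : ℝ) : dR (n+1) x ≤ dR n x := by
  rw [dR, dR, div_le_div_iff₀ (by positivity) (by positivity)]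
  have h1 : ⌊x * 2^(n+1)⌋ ≤ 2 * ⌊x * 2^n⌋ + 1 := by
    have : x * 2^(n+1) < ((2 * ⌊x * 2^n⌋ + 2 : ℤ) : ℝ) := by
      have := Int.lt_floor_add_one (x * 2^n)
      push_cast
      ring_nf
      nlinarith
    have := Int.floor_lt.2 this
    omega
  have h1'' : ((⌊x * 2^(n+1)⌋ : ℝ)) ≤ 2 * (⌊x * 2^n⌋ : ℝ) + 1 := by exact_mod_cast h1
  have h1' : ((⌊x * 2^(n+1)⌋ : ℝ) + 1) ≤ 2 * ((⌊x * 2^n⌋ : ℝ) + 1) := by linarith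
  calc ((⌊x * 2^(n+1)⌋ : ℝ) + 1) * 2^n ≤ 2 * ((⌊x * 2^n⌋ : ℝ) + 1) * 2^n := by nlinarith [pow_pos (two_pos (α := ℝ)) n]
    _ = ((⌊x * 2^n⌋ : ℝ) + 1) * 2^(n+1) := by ring

lemma dL_lt (n : ℕ) (x : ℝ) : dL n x < x := by
  rw [dL, div_lt_iff₀ (by positivity)]
  have := Int.ceil_lt_add_one (x * 2^n)
  linarith

lemma dL_ge (n : ℕ) (x : ℝ) : x - ((2:ℝ)⁻¹)^n ≤ dL n x := by
  rw [dL, le_div_iff₀ (by positivity)]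
  have := Int.le_ceil (x * 2^n)
  have h2 : ((2:ℝ)⁻¹)^n * 2^n = 1 := by rw [← mul_pow]; norm_num
  nlinarith

lemma dL_mono (n : ℕ) {x y : ℝ} (hxy : y ≤ x) (hy : dL n x < y) : dL n x ≤ dL n y := by
  rw [dL, div_lt_iff₀ (by positivity)] at hy
  have : ⌈x * 2^n⌉ ≤ ⌈y * 2^n⌉ := by
    have := Int.lt_ceil.2 (by push_cast; linarith : ((⌈x * 2^n⌉ - 1 : ℤ) : ℝ) < y * 2^n)
    omega
  rw [dL, dL]
  gcongr


lemma dL_anti (n : ℕ) (x : ℝ) : dL n x ≤ dL (n+1) x := by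
  rw [dL, dL, div_le_div_iff₀ (by positivity) (by positivity)]
  have h1 : 2 * ⌈x * 2^n⌉ - 1 ≤ ⌈x * 2^(n+1)⌉ := by
    have : ((2 * ⌈x * 2^n⌉ - 2 : ℤ) : ℝ) < x * 2^(n+1) := by
      have := Int.ceil_lt_add_one (x * 2^n)
      push_cast
      ring_nf
      nlinarith
    have := Int.lt_ceil.2 this
    omega
  have h1'' : 2 * (⌈x * 2^n⌉ : ℝ) - 1 ≤ ((⌈x * 2^(n+1)⌉ : ℝ)) := by exact_mod_cast h1
  have h1' : 2 * ((⌈x * 2^n⌉ : ℝ) - 1) ≤ ((⌈x * 2^(n+1)⌉ : ℝ) - 1) := by linarith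
  calc ((⌈x * 2^n⌉ : ℝ) - 1) * 2^(n+1) = 2 * ((⌈x * 2^n⌉ : ℝ) - 1) * 2^n := by ring
    _ ≤ ((⌈x * 2^(n+1)⌉ : ℝ) - 1) * 2^n := by nlinarith [pow_pos (two_pos (α := ℝ)) n]


open scoped Classical in
noncomputable def UR (A₂ : Set ℝ) : ℕ → ℝ → Set ℝ :=
  fun n x => match n with
  | 0 => univ
  | n+1 => if x ∈ A₂ then {x} else Ico x (dR n x)

open scoped Classical in
noncomputable def UL (A₂ : Set ℝ) : ℕ → ℝ → Set ℝ :=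
  fun n x => match n with
  | 0 => univ
  | n+1 => if x ∈ A₂ then {x} else Ioc (dL n x) x

section URfacts
variable (A₂ : Set ℝ)

lemma UR_zero (x : ℝ) : UR A₂ 0 x = univ := rfl

lemma UR_mem (n : ℕ) (x : ℝ) : x ∈ UR A₂ n x := by
  cases n with
  | zero => exact mem_univ x
  | succ n =>
    rw [UR]
    split
    · exact rfl
    · exact ⟨le_refl x, dR_gt n x⟩

lemma UR_anti (n : ℕ) (x : ℝ) : UR A₂ (n+1) x ⊆ UR A₂ n x := by
  cases n with
  | zero => exact subset_univ _
  | succ n =>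
    rw [UR, UR]
    split
    · exact subset_rfl
    · exact Ico_subset_Ico_right (dR_anti n x)

lemma UR_trans (n : ℕ) (x y : ℝ) (hy : y ∈ UR A₂ n x) : UR A₂ n y ⊆ UR A₂ n x := by
  cases n with
  | zero => exact subset_univ _
  | succ n =>
    rw [UR] at hy ⊢
    split at hy
    · rw [mem_singleton_iff] at hy; subst hy; exact subset_rfl
    · rw [UR]
      split
      · exact singleton_subset_iff.2 hy
      · exact Ico_subset_Ico hy.1 (dR_mono n hy.1 hy.2)

lemma UR_sep (x y : ℝ) (h : ∀ n, y ∈ UR A₂ n x) : y = x := by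
  by_cases hx : x ∈ A₂
  · have := h 1
    rw [UR, if_pos hx] at this
    exact this
  · have hxy : x ≤ y := by
      have := h 1; rw [UR, if_neg hx] at this; exact this.1
    refine le_antisymm ?_ hxy
    by_contra hc
    push_neg at hc
    obtain ⟨n, hn⟩ := exists_pow_lt_of_lt_one (sub_pos.2 hc) (by norm_num : (2:ℝ)⁻¹ < 1)
    have := h (n+1)
    rw [UR, if_neg hx] at this
    have := this.2.trans_le (dR_le n x)
    linarith

end URfacts

section ULfacts
variable (A₂ : Set ℝ)

lemma UL_zero (x : ℝ) : UL A₂ 0 x = univ := rfl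

lemma UL_mem (n : ℕ) (x : ℝ) : x ∈ UL A₂ n x := by
  cases n with
  | zero => exact mem_univ x
  | succ n =>
    rw [UL]
    split
    · exact rfl
    · exact ⟨dL_lt n x, le_refl x⟩

lemma UL_anti (n : ℕ) (x : ℝ) : UL A₂ (n+1) x ⊆ UL A₂ n x := by
  cases n with
  | zero => exact subset_univ _
  | succ n =>
    rw [UL, UL]
    split
    · exact subset_rfl
    · exact Ioc_subset_Ioc_left (dL_anti n x)

lemma UL_trans (n : ℕ) (x y : ℝ) (hy : y ∈ UL A₂ n x) : UL A₂ n y ⊆ UL A₂ n x := by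
  cases n with
  | zero => exact subset_univ _
  | succ n =>
    rw [UL] at hy ⊢
    split at hy
    · rw [mem_singleton_iff] at hy; subst hy; exact subset_rfl
    · rw [UL]
      split
      · exact singleton_subset_iff.2 hy
      · exact Ioc_subset_Ioc (dL_mono n hy.2 hy.1) hy.2

lemma UL_sep (x y : ℝ) (h : ∀ n, y ∈ UL A₂ n x) : y = x := by
  by_cases hx : x ∈ A₂
  · have := h 1
    rw [UL, if_pos hx] at this
    exact this
  · have hxy : y ≤ x := by
      have := h 1; rw [UL, if_neg hx] at this; exact this.2
    refine le_antisymm hxy ?_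
    by_contra hc
    push_neg at hc
    obtain ⟨n, hn⟩ := exists_pow_lt_of_lt_one (sub_pos.2 hc) (by norm_num : (2:ℝ)⁻¹ < 1)
    have := h (n+1)
    rw [UL, if_neg hx] at this
    have := (dL_ge n x).trans_lt this.1
    linarith

end ULfacts


/-- **Corollary 2.7.** If either `A₁ = A₃ = ∅` or `A₁ = A₄ = ∅`, then `H₄(𝒜)` is
non-archimedeanly quasi-metrizable. -/
theorem hybrid_naQuasiMetrizable_of_cases
    (A₁ A₂ A₃ A₄ : Set ℝ) (hcov : Is4Cover A₁ A₂ A₃ A₄)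
    (h : (A₁ = ∅ ∧ A₃ = ∅) ∨ (A₁ = ∅ ∧ A₄ = ∅)) :
    NAQuasiMetrizableTop (hybridTop A₁ A₂ A₃ A₄) := by
  rw [hybridTop]
  set G := ({S : Set ℝ | ∃ x ∈ A₁, ∃ ε : ℝ, 0 < ε ∧ S = Set.Ioo (x - ε) (x + ε)} ∪
     {S : Set ℝ | ∃ x ∈ A₂, S = {x}} ∪
     {S : Set ℝ | ∃ x ∈ A₃, ∃ ε : ℝ, 0 < ε ∧ S = Set.Ico x (x + ε)} ∪
     {S : Set ℝ | ∃ x ∈ A₄, ∃ ε : ℝ, 0 < ε ∧ S = Set.Ioc (x - ε) x}) with hG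
  rcases h with ⟨hA₁, hA₃⟩ | ⟨hA₁, hA₄⟩
  · -- left case : A₁ = A₃ = ∅, use UL
    have hmemA : ∀ x : ℝ, x ∈ A₂ ∨ x ∈ A₄ := by
      intro x
      have := hcov.1.symm ▸ mem_univ x
      rw [hA₁, hA₃] at this
      simpa using this
    refine habstract (UL_zero A₂) (UL_mem A₂) (UL_anti A₂) (UL_trans A₂) (UL_sep A₂) G ?_ ?_
    · intro n x
      cases n with
      | zero => exact GenerateOpen.univ
      | succ n =>
        rw [UL]
        split
        · exact GenerateOpen.basic _ (by
            rw [hG]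
            exact Or.inl (Or.inl (Or.inr ⟨x, ‹_›, rfl⟩)))
        · rcases hmemA x with hx | hx
          · exact absurd hx ‹_›
          · refine GenerateOpen.basic _ (by
              rw [hG]
              refine Or.inr ⟨x, hx, x - dL n x, by linarith [dL_lt n x], ?_⟩
              rw [show x - (x - dL n x) = dL n x by ring])
    · rintro s hs y hy
      rw [hG] at hs
      rcases hs with ((h1 | h2) | h3) | h4
      · obtain ⟨x, hx, -⟩ := h1; rw [hA₁] at hx; exact absurd hx (notMem_empty x)
      · obtain ⟨x, hx, rfl⟩ := h2
        rw [mem_singleton_iff] at hy; subst hy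
        exact ⟨1, by rw [UL, if_pos hx]⟩
      · obtain ⟨x, hx, -⟩ := h3; rw [hA₃] at hx; exact absurd hx (notMem_empty x)
      · obtain ⟨x, hx, ε, hε, rfl⟩ := h4
        by_cases hy₂ : y ∈ A₂
        · exact ⟨1, by rw [UL, if_pos hy₂]; exact singleton_subset_iff.2 hy⟩
        · obtain ⟨n, hn⟩ := exists_pow_lt_of_lt_one (sub_pos.2 hy.1) (by norm_num : (2:ℝ)⁻¹ < 1)
          refine ⟨n+1, ?_⟩
          rw [UL, if_neg hy₂]
          refine Ioc_subset_Ioc ?_ hy.2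
          have := dL_ge n y
          linarith
  · -- right case : A₁ = A₄ = ∅, use UR
    have hmemA : ∀ x : ℝ, x ∈ A₂ ∨ x ∈ A₃ := by
      intro x
      have := hcov.1.symm ▸ mem_univ x
      rw [hA₁, hA₄] at this
      simpa using this
    refine habstract (UR_zero A₂) (UR_mem A₂) (UR_anti A₂) (UR_trans A₂) (UR_sep A₂) G ?_ ?_
    · intro n x
      cases n with
      | zero => exact GenerateOpen.univ
      | succ n =>
        rw [UR]
        split
        · exact GenerateOpen.basic _ (by
            rw [hG]
            exact Or.inl (Or.inl (Or.inr ⟨x, ‹_›, rfl⟩)))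
        · rcases hmemA x with hx | hx
          · exact absurd hx ‹_›
          · refine GenerateOpen.basic _ (by
              rw [hG]
              refine Or.inl (Or.inr ⟨x, hx, dR n x - x, by linarith [dR_gt n x], ?_⟩)
              rw [show x + (dR n x - x) = dR n x by ring])
    · rintro s hs y hy
      rw [hG] at hs
      rcases hs with ((h1 | h2) | h3) | h4
      · obtain ⟨x, hx, -⟩ := h1; rw [hA₁] at hx; exact absurd hx (notMem_empty x)
      · obtain ⟨x, hx, rfl⟩ := h2
        rw [mem_singleton_iff] at hy; subst hy
        exact ⟨1, by rw [UR, if_pos hx]⟩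
      · obtain ⟨x, hx, ε, hε, rfl⟩ := h3
        by_cases hy₂ : y ∈ A₂
        · exact ⟨1, by rw [UR, if_pos hy₂]; exact singleton_subset_iff.2 hy⟩
        · obtain ⟨n, hn⟩ := exists_pow_lt_of_lt_one (sub_pos.2 hy.2) (by norm_num : (2:ℝ)⁻¹ < 1)
          refine ⟨n+1, ?_⟩
          rw [UR, if_neg hy₂]
          refine Ico_subset_Ico hy.1 ?_
          have := dR_le n y
          linarith
      · obtain ⟨x, hx, -⟩ := h4; rw [hA₄] at hx; exact absurd hx (notMem_empty x)
end

section
/- Let 𝒜 = {A₁, A₂, A₃, A₄} be a 4-cover of ℝ. If the hybrid space H₄(𝒜) is quasi-metrizable, then (i) there exists a family {Fₙ : n ∈ ω} of subsets of A₃ such that A₃ = ⋃ₙ Fₙ and, for every n ∈ ω, the closure of Fₙ in 𝕊← is contained in A₂ ∪ A₃, and (ii) there exists a family {Hₙ : n ∈ ω} of subsets of A₄ such that A₄ = ⋃ₙ Hₙ and, for every n ∈ ω, the closure of Hₙ in 𝕊 is contained in A₂ ∪ A₄. -/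
open Set

open TopologicalSpace

def hgensOf (A₁ A₂ A₃ A₄ : Set ℝ) : Set (Set ℝ) :=
  ({S : Set ℝ | ∃ x ∈ A₁, ∃ ε : ℝ, 0 < ε ∧ S = Set.Ioo (x - ε) (x + ε)} ∪
     {S : Set ℝ | ∃ x ∈ A₂, S = {x}} ∪
     {S : Set ℝ | ∃ x ∈ A₃, ∃ ε : ℝ, 0 < ε ∧ S = Set.Ico x (x + ε)} ∪
     {S : Set ℝ | ∃ x ∈ A₄, ∃ ε : ℝ, 0 < ε ∧ S = Set.Ioc (x - ε) x})

def qgensOf (ρ : ℝ → ℝ → ℝ) : Set (Set ℝ) :=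
  {B : Set ℝ | ∃ x : ℝ, ∃ r : ℝ, 0 < r ∧ B = {y : ℝ | ρ x y < r}}

lemma quasi_open_ball {ρ : ℝ → ℝ → ℝ}
    (htri : ∀ x y z, ρ x y ≤ ρ x z + ρ z y)
    {U : Set ℝ} (hU : GenerateOpen (qgensOf ρ) U) :
    ∀ p ∈ U, ∃ r, 0 < r ∧ ∀ z, ρ p z < r → z ∈ U := by
  induction hU with
  | basic S hS =>
      rintro p hp
      obtain ⟨x, r, hr, rfl⟩ := hS
      have hp' : ρ x p < r := hp
      refine ⟨r - ρ x p, by linarith, fun z hz => ?_⟩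
      have h := htri x z p
      show ρ x z < r
      linarith
  | univ => exact fun p _ => ⟨1, one_pos, fun _ _ => mem_univ _⟩
  | inter U V _ _ ihU ihV =>
      rintro p ⟨hpU, hpV⟩
      obtain ⟨r1, hr1, h1⟩ := ihU p hpU
      obtain ⟨r2, hr2, h2⟩ := ihV p hpV
      exact ⟨min r1 r2, lt_min hr1 hr2, fun z hz =>
        ⟨h1 z (hz.trans_le (min_le_left _ _)), h2 z (hz.trans_le (min_le_right _ _))⟩⟩
  | sUnion 𝒮 _ ih =>
      rintro p ⟨S, hS, hpS⟩
      obtain ⟨r, hr, h⟩ := ih S hS p hpS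
      exact ⟨r, hr, fun z hz => ⟨S, hS, h z hz⟩⟩


lemma locGood_of_around {U : Set ℝ} {p : ℝ}
    (h : ∃ η, 0 < η ∧ Ioo (p - η) (p + η) ⊆ U) :
    (∃ η, 0 < η ∧ Ioo (p - η) (p + η) ⊆ U) ∧
    (∃ η, 0 < η ∧ Ico p (p + η) ⊆ U) ∧
    (∃ η, 0 < η ∧ Ioc (p - η) p ⊆ U) := by
  obtain ⟨η, hη, hs⟩ := h
  exact ⟨⟨η, hη, hs⟩,
    ⟨η, hη, fun w hw => hs ⟨by linarith [hw.1], hw.2⟩⟩,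
    ⟨η, hη, fun w hw => hs ⟨hw.1, by linarith [hw.2]⟩⟩⟩

lemma hybrid_open_local {A₁ A₂ A₃ A₄ : Set ℝ} (hcov : Is4Cover A₁ A₂ A₃ A₄)
    {U : Set ℝ} (hU : GenerateOpen (hgensOf A₁ A₂ A₃ A₄) U) :
    ∀ p ∈ U,
      (p ∈ A₁ → ∃ η, 0 < η ∧ Ioo (p - η) (p + η) ⊆ U) ∧
      (p ∈ A₃ → ∃ η, 0 < η ∧ Ico p (p + η) ⊆ U) ∧
      (p ∈ A₄ → ∃ η, 0 < η ∧ Ioc (p - η) p ⊆ U) := by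
  obtain ⟨-, h12, h13, h14, h23, h24, h34⟩ := hcov
  induction hU with
  | basic S hS =>
      intro p hp
      simp only [hgensOf, Set.mem_union, Set.mem_setOf_eq] at hS
      rcases hS with (((⟨a, ha, ε, hε, rfl⟩ | ⟨a, ha, rfl⟩) | ⟨a, ha, ε, hε, rfl⟩) |
        ⟨a, ha, ε, hε, rfl⟩)
      · -- Ioo (a-ε) (a+ε)
        obtain ⟨h1, h2⟩ := hp
        have := locGood_of_around (U := Ioo (a - ε) (a + ε)) (p := p)
          ⟨min (p - (a - ε)) (a + ε - p), lt_min (by linarith) (by linarith),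
            fun w hw => ⟨by linarith [hw.1, min_le_left (p - (a - ε)) (a + ε - p)],
              by linarith [hw.2, min_le_right (p - (a - ε)) (a + ε - p)]⟩⟩
        exact ⟨fun _ => this.1, fun _ => this.2.1, fun _ => this.2.2⟩
      · -- {a}, a ∈ A₂
        have hpa : p = a := hp
        subst hpa
        exact ⟨fun h' => (Set.disjoint_left.mp h12 h' ha).elim,
          fun h' => (Set.disjoint_left.mp h23 ha h').elim,
          fun h' => (Set.disjoint_left.mp h24 ha h').elim⟩
      · -- Ico a (a+ε), a ∈ A₃
        obtain ⟨h1, h2⟩ := hp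
        refine ⟨fun hp1 => ?_, fun hp3 => ?_, fun hp4 => ?_⟩
        · have hne : a ≠ p := fun h => Set.disjoint_left.mp h13 hp1 (h ▸ ha)
          have hlt : a < p := lt_of_le_of_ne h1 hne
          exact (locGood_of_around (U := Ico a (a + ε)) (p := p) ⟨min (p - a) (a + ε - p), lt_min (by linarith) (by linarith),
            fun w hw => ⟨by linarith [hw.1, min_le_left (p - a) (a + ε - p)],
              by linarith [hw.2, min_le_right (p - a) (a + ε - p)]⟩⟩).1
        · exact ⟨a + ε - p, by linarith, fun w hw => ⟨le_trans h1 hw.1, by linarith [hw.2]⟩⟩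
        · have hne : a ≠ p := fun h => Set.disjoint_left.mp h34 (h ▸ ha) hp4
          have hlt : a < p := lt_of_le_of_ne h1 hne
          exact ⟨p - a, by linarith, fun w hw => ⟨by linarith [hw.1], lt_of_le_of_lt hw.2 h2⟩⟩
      · -- Ioc (a-ε) a, a ∈ A₄
        obtain ⟨h1, h2⟩ := hp
        refine ⟨fun hp1 => ?_, fun hp3 => ?_, fun hp4 => ?_⟩
        · have hne : p ≠ a := fun h => Set.disjoint_left.mp h14 hp1 (h ▸ ha)
          have hlt : p < a := lt_of_le_of_ne h2 hne
          exact (locGood_of_around (U := Ioc (a - ε) a) (p := p) ⟨min (p - (a - ε)) (a - p), lt_min (by linarith) (by linarith),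
            fun w hw => ⟨by linarith [hw.1, min_le_left (p - (a - ε)) (a - p)],
              by linarith [hw.2, min_le_right (p - (a - ε)) (a - p)]⟩⟩).1
        · have hne : p ≠ a := fun h => Set.disjoint_left.mp h34 hp3 (h ▸ ha)
          have hlt : p < a := lt_of_le_of_ne h2 hne
          exact ⟨a - p, by linarith, fun w hw => ⟨lt_of_lt_of_le h1 hw.1, by linarith [hw.2]⟩⟩
        · exact ⟨p - (a - ε), by linarith, fun w hw => ⟨by linarith [hw.1], le_trans hw.2 h2⟩⟩
  | univ =>
      intro p _
      have := locGood_of_around (U := (univ : Set ℝ)) (p := p) ⟨1, one_pos, fun _ _ => mem_univ _⟩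
      exact ⟨fun _ => this.1, fun _ => this.2.1, fun _ => this.2.2⟩
  | inter U V _ _ ihU ihV =>
      rintro p ⟨hpU, hpV⟩
      have iU := ihU p hpU
      have iV := ihV p hpV
      refine ⟨fun h' => ?_, fun h' => ?_, fun h' => ?_⟩
      · obtain ⟨η1, hη1, s1⟩ := iU.1 h'
        obtain ⟨η2, hη2, s2⟩ := iV.1 h'
        exact ⟨min η1 η2, lt_min hη1 hη2, fun w hw =>
          ⟨s1 ⟨by linarith [hw.1, min_le_left η1 η2], by linarith [hw.2, min_le_left η1 η2]⟩,
           s2 ⟨by linarith [hw.1, min_le_right η1 η2], by linarith [hw.2, min_le_right η1 η2]⟩⟩⟩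
      · obtain ⟨η1, hη1, s1⟩ := iU.2.1 h'
        obtain ⟨η2, hη2, s2⟩ := iV.2.1 h'
        exact ⟨min η1 η2, lt_min hη1 hη2, fun w hw =>
          ⟨s1 ⟨hw.1, by linarith [hw.2, min_le_left η1 η2]⟩,
           s2 ⟨hw.1, by linarith [hw.2, min_le_right η1 η2]⟩⟩⟩
      · obtain ⟨η1, hη1, s1⟩ := iU.2.2 h'
        obtain ⟨η2, hη2, s2⟩ := iV.2.2 h'
        exact ⟨min η1 η2, lt_min hη1 hη2, fun w hw =>
          ⟨s1 ⟨by linarith [hw.1, min_le_left η1 η2], hw.2⟩,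
           s2 ⟨by linarith [hw.1, min_le_right η1 η2], hw.2⟩⟩⟩
  | sUnion 𝒮 _ ih =>
      rintro p ⟨S, hS, hpS⟩
      have iS := ih S hS p hpS
      refine ⟨fun h' => ?_, fun h' => ?_, fun h' => ?_⟩
      · obtain ⟨η, hη, hs⟩ := iS.1 h'
        exact ⟨η, hη, fun w hw => ⟨S, hS, hs hw⟩⟩
      · obtain ⟨η, hη, hs⟩ := iS.2.1 h'
        exact ⟨η, hη, fun w hw => ⟨S, hS, hs hw⟩⟩
      · obtain ⟨η, hη, hs⟩ := iS.2.2 h'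
        exact ⟨η, hη, fun w hw => ⟨S, hS, hs hw⟩⟩

def Fset (ρ : ℝ → ℝ → ℝ) (A₃ : Set ℝ) (n m : ℕ) : Set ℝ :=
  {x | x ∈ A₃ ∧ (∀ z, ρ x z < 1 / ((n : ℝ) + 1) → x ≤ z) ∧
       (∀ w, x ≤ w → w < x + 1 / ((m : ℝ) + 1) → ρ x w < 1 / (2 * ((n : ℝ) + 1)))}


lemma part3 {A₁ A₂ A₃ A₄ : Set ℝ} (hcov : Is4Cover A₁ A₂ A₃ A₄)
    {ρ : ℝ → ℝ → ℝ} (hρ : IsQuasiMetric ρ)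
    (htop : hybridTop A₁ A₂ A₃ A₄ = quasiMetricTop ρ) :
    ∃ F : ℕ → Set ℝ, (∀ n, F n ⊆ A₃) ∧ A₃ = ⋃ n, F n ∧
      ∀ n, @closure ℝ sorgenfreyLeftTop (F n) ⊆ A₂ ∪ A₃ := by
  obtain ⟨hnn, hzero, htri⟩ := hρ
  have hiff : ∀ U : Set ℝ, GenerateOpen (hgensOf A₁ A₂ A₃ A₄) U ↔ GenerateOpen (qgensOf ρ) U := by
    intro U
    have h : (hybridTop A₁ A₂ A₃ A₄).IsOpen U = (quasiMetricTop ρ).IsOpen U := by rw [htop]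
    exact iff_of_eq h
  refine ⟨fun k => Fset ρ A₃ (Nat.unpair k).1 (Nat.unpair k).2, fun k x hx => hx.1, ?_, ?_⟩
  · ext x
    simp only [mem_iUnion]
    constructor
    · intro hx
      have hIcoGen : Ico x (x + 1) ∈ hgensOf A₁ A₂ A₃ A₄ := by
        simp only [hgensOf, Set.mem_union, Set.mem_setOf_eq]
        exact Or.inl (Or.inr ⟨x, hx, 1, one_pos, rfl⟩)
      have hIco : GenerateOpen (qgensOf ρ) (Ico x (x + 1)) :=
        (hiff _).mp (GenerateOpen.basic _ hIcoGen)
      obtain ⟨r, hr, hball⟩ := quasi_open_ball htri hIco x ⟨le_refl x, by linarith⟩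
      obtain ⟨n, hn⟩ := exists_nat_one_div_lt hr
      have hs : (0:ℝ) < 1 / (2 * ((n : ℝ) + 1)) := by positivity
      have hBgen : {y | ρ x y < 1 / (2 * ((n : ℝ) + 1))} ∈ qgensOf ρ := ⟨x, _, hs, rfl⟩
      have hB : GenerateOpen (hgensOf A₁ A₂ A₃ A₄) {y | ρ x y < 1 / (2 * ((n : ℝ) + 1))} :=
        (hiff _).mpr (GenerateOpen.basic _ hBgen)
      have hx0 : x ∈ {y | ρ x y < 1 / (2 * ((n : ℝ) + 1))} := by
        show ρ x x < _
        rw [(hzero x x).mpr rfl]; exact hs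
      obtain ⟨η, hη, hIcoball⟩ := (hybrid_open_local ⟨hcov.1, hcov.2⟩ hB x hx0).2.1 hx
      obtain ⟨m, hm⟩ := exists_nat_one_div_lt hη
      refine ⟨Nat.pair n m, ?_⟩
      show x ∈ Fset ρ A₃ (Nat.unpair (Nat.pair n m)).1 (Nat.unpair (Nat.pair n m)).2
      rw [Nat.unpair_pair]
      refine ⟨hx, fun z hz => (hball z (hz.trans hn)).1, fun w hw1 hw2 => ?_⟩
      exact hIcoball ⟨hw1, by linarith⟩
    · rintro ⟨k, hk⟩
      exact hk.1
  · intro k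
    intro y hy
    by_contra hyn
    set n := (Nat.unpair k).1 with hnd
    set m := (Nat.unpair k).2 with hmd
    have hy14 : y ∈ A₁ ∪ A₄ := by
      have hu : y ∈ A₁ ∪ A₂ ∪ A₃ ∪ A₄ := hcov.1 ▸ mem_univ y
      simp only [Set.mem_union] at hu hyn ⊢
      push_neg at hyn
      tauto
    have hmeet : ∀ δ : ℝ, 0 < δ → ∃ x, x ∈ Fset ρ A₃ n m ∧ y - δ < x ∧ x ≤ y := by
      intro δ hδ
      letI : TopologicalSpace ℝ := sorgenfreyLeftTop
      have hopen : IsOpen (Ioc (y - δ) y) :=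
        GenerateOpen.basic _ ⟨y - δ, y, rfl⟩
      obtain ⟨x, hx1, hx2⟩ :=
        mem_closure_iff.mp hy _ hopen ⟨by linarith, le_refl y⟩
      exact ⟨x, hx2, hx1.1, hx1.2⟩
    have hn1 : (0:ℝ) < (n : ℝ) + 1 := by positivity
    have hs : (0:ℝ) < 1 / (2 * ((n : ℝ) + 1)) := by positivity
    have hBgen : {z | ρ y z < 1 / (2 * ((n : ℝ) + 1))} ∈ qgensOf ρ := ⟨y, _, hs, rfl⟩
    have hBopen : GenerateOpen (hgensOf A₁ A₂ A₃ A₄) {z | ρ y z < 1 / (2 * ((n : ℝ) + 1))} :=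
      (hiff _).mpr (GenerateOpen.basic _ hBgen)
    have hy0 : y ∈ {z | ρ y z < 1 / (2 * ((n : ℝ) + 1))} := by
      show ρ y y < _
      rw [(hzero y y).mpr rfl]; exact hs
    have hloc := hybrid_open_local ⟨hcov.1, hcov.2⟩ hBopen y hy0
    obtain ⟨η, hη, hleft⟩ :
        ∃ η, 0 < η ∧ ∀ z, y - η < z → z ≤ y → ρ y z < 1 / (2 * ((n : ℝ) + 1)) := by
      rcases hy14 with hy1 | hy4
      · obtain ⟨η, hη, hsub⟩ := hloc.1 hy1
        exact ⟨η, hη, fun z h1 h2 => hsub ⟨h1, by linarith⟩⟩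
      · obtain ⟨η, hη, hsub⟩ := hloc.2.2 hy4
        exact ⟨η, hη, fun z h1 h2 => hsub ⟨h1, h2⟩⟩
    have hm1 : (0:ℝ) < 1 / ((m : ℝ) + 1) := by positivity
    obtain ⟨x, hxF, hx1, hx2⟩ := hmeet (min η (1 / ((m : ℝ) + 1))) (lt_min hη hm1)
    obtain ⟨hxA3, hxP1, hxP2⟩ := hxF
    have hxy : x ≠ y := by
      rintro rfl
      rcases hy14 with hy1 | hy4
      · exact Set.disjoint_left.mp hcov.2.2.1 hy1 hxA3
      · exact Set.disjoint_left.mp hcov.2.2.2.2.2.2 hxA3 hy4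
    have hxlt : x < y := lt_of_le_of_ne hx2 hxy
    have hmin1 : min η (1 / ((m : ℝ) + 1)) ≤ η := min_le_left _ _
    have hmin2 : min η (1 / ((m : ℝ) + 1)) ≤ 1 / ((m : ℝ) + 1) := min_le_right _ _
    have hρxy : ρ x y < 1 / (2 * ((n : ℝ) + 1)) := hxP2 y hx2 (by linarith)
    set z := ((y - min η (1 / ((m : ℝ) + 1))) + x) / 2 with hzd
    have hz1 : y - min η (1 / ((m : ℝ) + 1)) < z := by rw [hzd]; linarith
    have hz2 : z < x := by rw [hzd]; linarith
    have hρyz : ρ y z < 1 / (2 * ((n : ℝ) + 1)) := hleft z (by linarith) (by linarith)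
    have htr : ρ x z ≤ ρ x y + ρ y z := htri x z y
    have harith : 1 / (2 * ((n : ℝ) + 1)) + 1 / (2 * ((n : ℝ) + 1)) = 1 / ((n : ℝ) + 1) := by
      field_simp
      norm_num
    have hxz : ρ x z < 1 / ((n : ℝ) + 1) := by linarith
    have := hxP1 z hxz
    linarith


def Hset (ρ : ℝ → ℝ → ℝ) (A₄ : Set ℝ) (n m : ℕ) : Set ℝ :=
  {x | x ∈ A₄ ∧ (∀ z, ρ x z < 1 / ((n : ℝ) + 1) → z ≤ x) ∧
       (∀ w, x - 1 / ((m : ℝ) + 1) < w → w ≤ x → ρ x w < 1 / (2 * ((n : ℝ) + 1)))}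


lemma part4 {A₁ A₂ A₃ A₄ : Set ℝ} (hcov : Is4Cover A₁ A₂ A₃ A₄)
    {ρ : ℝ → ℝ → ℝ} (hρ : IsQuasiMetric ρ)
    (htop : hybridTop A₁ A₂ A₃ A₄ = quasiMetricTop ρ) :
    ∃ H : ℕ → Set ℝ, (∀ n, H n ⊆ A₄) ∧ A₄ = ⋃ n, H n ∧
      ∀ n, @closure ℝ sorgenfreyTop (H n) ⊆ A₂ ∪ A₄ := by
  obtain ⟨hnn, hzero, htri⟩ := hρ
  have hiff : ∀ U : Set ℝ, GenerateOpen (hgensOf A₁ A₂ A₃ A₄) U ↔ GenerateOpen (qgensOf ρ) U := by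
    intro U
    have h : (hybridTop A₁ A₂ A₃ A₄).IsOpen U = (quasiMetricTop ρ).IsOpen U := by rw [htop]
    exact iff_of_eq h
  refine ⟨fun k => Hset ρ A₄ (Nat.unpair k).1 (Nat.unpair k).2, fun k x hx => hx.1, ?_, ?_⟩
  · ext x
    simp only [mem_iUnion]
    constructor
    · intro hx
      have hIocGen : Ioc (x - 1) x ∈ hgensOf A₁ A₂ A₃ A₄ := by
        simp only [hgensOf, Set.mem_union, Set.mem_setOf_eq]
        exact Or.inr ⟨x, hx, 1, one_pos, rfl⟩
      have hIoc : GenerateOpen (qgensOf ρ) (Ioc (x - 1) x) :=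
        (hiff _).mp (GenerateOpen.basic _ hIocGen)
      obtain ⟨r, hr, hball⟩ := quasi_open_ball htri hIoc x ⟨by linarith, le_refl x⟩
      obtain ⟨n, hn⟩ := exists_nat_one_div_lt hr
      have hs : (0:ℝ) < 1 / (2 * ((n : ℝ) + 1)) := by positivity
      have hBgen : {y | ρ x y < 1 / (2 * ((n : ℝ) + 1))} ∈ qgensOf ρ := ⟨x, _, hs, rfl⟩
      have hB : GenerateOpen (hgensOf A₁ A₂ A₃ A₄) {y | ρ x y < 1 / (2 * ((n : ℝ) + 1))} :=
        (hiff _).mpr (GenerateOpen.basic _ hBgen)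
      have hx0 : x ∈ {y | ρ x y < 1 / (2 * ((n : ℝ) + 1))} := by
        show ρ x x < _
        rw [(hzero x x).mpr rfl]; exact hs
      obtain ⟨η, hη, hIocball⟩ := (hybrid_open_local ⟨hcov.1, hcov.2⟩ hB x hx0).2.2 hx
      obtain ⟨m, hm⟩ := exists_nat_one_div_lt hη
      refine ⟨Nat.pair n m, ?_⟩
      show x ∈ Hset ρ A₄ (Nat.unpair (Nat.pair n m)).1 (Nat.unpair (Nat.pair n m)).2
      rw [Nat.unpair_pair]
      refine ⟨hx, fun z hz => (hball z (hz.trans hn)).2, fun w hw1 hw2 => ?_⟩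
      exact hIocball ⟨by linarith, hw2⟩
    · rintro ⟨k, hk⟩
      exact hk.1
  · intro k
    intro y hy
    by_contra hyn
    set n := (Nat.unpair k).1 with hnd
    set m := (Nat.unpair k).2 with hmd
    have hy13 : y ∈ A₁ ∪ A₃ := by
      have hu : y ∈ A₁ ∪ A₂ ∪ A₃ ∪ A₄ := hcov.1 ▸ mem_univ y
      simp only [Set.mem_union] at hu hyn ⊢
      push_neg at hyn
      tauto
    have hmeet : ∀ δ : ℝ, 0 < δ → ∃ x, x ∈ Hset ρ A₄ n m ∧ y ≤ x ∧ x < y + δ := by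
      intro δ hδ
      letI : TopologicalSpace ℝ := sorgenfreyTop
      have hopen : IsOpen (Ico y (y + δ)) :=
        GenerateOpen.basic _ ⟨y, y + δ, rfl⟩
      obtain ⟨x, hx1, hx2⟩ :=
        mem_closure_iff.mp hy _ hopen ⟨le_refl y, by linarith⟩
      exact ⟨x, hx2, hx1.1, hx1.2⟩
    have hn1 : (0:ℝ) < (n : ℝ) + 1 := by positivity
    have hs : (0:ℝ) < 1 / (2 * ((n : ℝ) + 1)) := by positivity
    have hBgen : {z | ρ y z < 1 / (2 * ((n : ℝ) + 1))} ∈ qgensOf ρ := ⟨y, _, hs, rfl⟩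
    have hBopen : GenerateOpen (hgensOf A₁ A₂ A₃ A₄) {z | ρ y z < 1 / (2 * ((n : ℝ) + 1))} :=
      (hiff _).mpr (GenerateOpen.basic _ hBgen)
    have hy0 : y ∈ {z | ρ y z < 1 / (2 * ((n : ℝ) + 1))} := by
      show ρ y y < _
      rw [(hzero y y).mpr rfl]; exact hs
    have hloc := hybrid_open_local ⟨hcov.1, hcov.2⟩ hBopen y hy0
    obtain ⟨η, hη, hright⟩ :
        ∃ η, 0 < η ∧ ∀ z, y ≤ z → z < y + η → ρ y z < 1 / (2 * ((n : ℝ) + 1)) := by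
      rcases hy13 with hy1 | hy3
      · obtain ⟨η, hη, hsub⟩ := hloc.1 hy1
        exact ⟨η, hη, fun z h1 h2 => hsub ⟨by linarith, h2⟩⟩
      · obtain ⟨η, hη, hsub⟩ := hloc.2.1 hy3
        exact ⟨η, hη, fun z h1 h2 => hsub ⟨h1, h2⟩⟩
    have hm1 : (0:ℝ) < 1 / ((m : ℝ) + 1) := by positivity
    obtain ⟨x, hxF, hx1, hx2⟩ := hmeet (min η (1 / ((m : ℝ) + 1))) (lt_min hη hm1)
    obtain ⟨hxA4, hxP1, hxP2⟩ := hxF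
    have hxy : x ≠ y := by
      rintro rfl
      rcases hy13 with hy1 | hy3
      · exact Set.disjoint_left.mp hcov.2.2.2.1 hy1 hxA4
      · exact Set.disjoint_left.mp hcov.2.2.2.2.2.2 hy3 hxA4
    have hxlt : y < x := lt_of_le_of_ne hx1 (Ne.symm hxy)
    have hmin1 : min η (1 / ((m : ℝ) + 1)) ≤ η := min_le_left _ _
    have hmin2 : min η (1 / ((m : ℝ) + 1)) ≤ 1 / ((m : ℝ) + 1) := min_le_right _ _
    have hρxy : ρ x y < 1 / (2 * ((n : ℝ) + 1)) := hxP2 y (by linarith) (le_of_lt hxlt)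
    set z := (x + (y + min η (1 / ((m : ℝ) + 1)))) / 2 with hzd
    have hz1 : z < y + min η (1 / ((m : ℝ) + 1)) := by rw [hzd]; linarith
    have hz2 : x < z := by rw [hzd]; linarith
    have hρyz : ρ y z < 1 / (2 * ((n : ℝ) + 1)) := hright z (by linarith) (by linarith)
    have htr : ρ x z ≤ ρ x y + ρ y z := htri x z y
    have harith : 1 / (2 * ((n : ℝ) + 1)) + 1 / (2 * ((n : ℝ) + 1)) = 1 / ((n : ℝ) + 1) := by
      field_simp
      norm_num
    have hxz : ρ x z < 1 / ((n : ℝ) + 1) := by linarith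
    have := hxP1 z hxz
    linarith

/-- **Theorem 2.8.** If `H₄(𝒜)` is quasi-metrizable, then `A₃` is a countable union
of sets whose `𝕊←`-closures lie in `A₂ ∪ A₃`, and `A₄` is a countable union of sets
whose `𝕊`-closures lie in `A₂ ∪ A₄`. -/
theorem sigma_closures_of_hybrid_quasiMetrizable
    (A₁ A₂ A₃ A₄ : Set ℝ) (hcov : Is4Cover A₁ A₂ A₃ A₄)
    (hqm : QuasiMetrizableTop (hybridTop A₁ A₂ A₃ A₄)) :
    (∃ F : ℕ → Set ℝ, (∀ n, F n ⊆ A₃) ∧ A₃ = ⋃ n, F n ∧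
      ∀ n, @closure ℝ sorgenfreyLeftTop (F n) ⊆ A₂ ∪ A₃) ∧
    (∃ H : ℕ → Set ℝ, (∀ n, H n ⊆ A₄) ∧ A₄ = ⋃ n, H n ∧
      ∀ n, @closure ℝ sorgenfreyTop (H n) ⊆ A₂ ∪ A₄) := by
  obtain ⟨ρ, hρ, htop⟩ := hqm
  exact ⟨part3 hcov hρ htop, part4 hcov hρ htop⟩
end
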